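/- arXiv:1904.10108 — 12 statements merged into one kernel-verified Lean document; each statement's English description precedes it below -/
import Mathlib

section
/- Generation for variables: Let ≤ be a binary relation on types satisfying the kernel axioms. If Γ ⊢ x : A is derivable, where the declarations in Γ bind pairwise distinct variables and x:B occurs in Γ, then B ≤ A. -/
/-- Intersection types: base types, intersection, omega, arrow, product. -/
inductive Ty (X : Type) : Type
  | base : X → Ty X
  | inter : Ty X → Ty X → Ty X
  | omega : Ty X
  | arrow : Ty X → Ty X → Ty X
  | prod : Ty X → Ty X → Ty X

/-- Lambda terms with pairs and projections, named variables. -/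
inductive Tm : Type
  | var : ℕ → Tm
  | lam : ℕ → Tm → Tm
  | app : Tm → Tm → Tm
  | pair : Tm → Tm → Tm
  | fst : Tm → Tm
  | snd : Tm → Tm

/-- Free variables of a term. -/
def Tm.fv : Tm → Finset ℕ
  | .var x => {x}
  | .lam x t => t.fv.erase x
  | .app t u => t.fv ∪ u.fv
  | .pair t u => t.fv ∪ u.fv
  | .fst t => t.fv
  | .snd t => t.fv

/-- All variables (free or bound) occurring in a term. -/
def Tm.allVars : Tm → Finset ℕ
  | .var x => {x}
  | .lam x t => insert x t.allVars
  | .app t u => t.allVars ∪ u.allVars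
  | .pair t u => t.allVars ∪ u.allVars
  | .fst t => t.allVars
  | .snd t => t.allVars

def Tm.size : Tm → ℕ
  | .var _ => 1
  | .lam _ t => t.size + 1
  | .app t u => t.size + u.size + 1
  | .pair t u => t.size + u.size + 1
  | .fst t => t.size + 1
  | .snd t => t.size + 1

/-- Renaming of the free occurrences of a variable `x` into `z`. -/
def Tm.rename (x z : ℕ) : Tm → Tm
  | .var y => if y = x then .var z else .var y
  | .lam y t => if y = x then .lam y t else .lam y (t.rename x z)
  | .app t u => .app (t.rename x z) (u.rename x z)
  | .pair t u => .pair (t.rename x z) (u.rename x z)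
  | .fst t => .fst (t.rename x z)
  | .snd t => .snd (t.rename x z)

theorem Tm.size_rename (x z : ℕ) (t : Tm) : (t.rename x z).size = t.size := by
  induction t with
  | var y => by_cases h : y = x <;> simp [Tm.rename, Tm.size, h]
  | lam y t ih => by_cases h : y = x <;> simp [Tm.rename, Tm.size, h, ih]
  | app t u iht ihu => simp [Tm.rename, Tm.size, iht, ihu]
  | pair t u iht ihu => simp [Tm.rename, Tm.size, iht, ihu]
  | fst t ih => simp [Tm.rename, Tm.size, ih]
  | snd t ih => simp [Tm.rename, Tm.size, ih]

/-- A variable not belonging to the finite set `s`. -/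
def freshVar (s : Finset ℕ) : ℕ := (s.sup id) + 1

/-- Capture-avoiding substitution `t[u/x]`: bound variables are renamed to
fresh ones when they would capture a free variable of `u`. -/
def Tm.subst (t : Tm) (x : ℕ) (u : Tm) : Tm :=
  match t with
  | .var y => if y = x then u else .var y
  | .app t₁ t₂ => .app (t₁.subst x u) (t₂.subst x u)
  | .pair t₁ t₂ => .pair (t₁.subst x u) (t₂.subst x u)
  | .fst t => .fst (t.subst x u)
  | .snd t => .snd (t.subst x u)
  | .lam y t =>
      if y = x then .lam y t
      else if y ∈ u.fv then
        let z := freshVar (u.fv ∪ t.allVars ∪ {x})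
        .lam z ((t.rename y z).subst x u)
      else .lam y (t.subst x u)
  termination_by t.size
  decreasing_by all_goals simp [Tm.size, Tm.size_rename] <;> omega

/-- The typing judgment of the intersection type system with arrow and
product types, parameterized by a subtyping relation `le`. -/
inductive Typing {X : Type} (le : Ty X → Ty X → Prop) : List (ℕ × Ty X) → Tm → Ty X → Prop
  | var (Γ Δ : List (ℕ × Ty X)) (x : ℕ) (A : Ty X) :
      Typing le (Γ ++ (x, A) :: Δ) (.var x) A
  | sub {Γ t A B} : Typing le Γ t A → le A B → Typing le Γ t B
  | inter {Γ t A B} : Typing le Γ t A → Typing le Γ t B → Typing le Γ t (.inter A B)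
  | omega (Γ : List (ℕ × Ty X)) (t : Tm) : Typing le Γ t .omega
  | abs {Γ x t A B} : Typing le (Γ ++ [(x, A)]) t B → Typing le Γ (.lam x t) (.arrow A B)
  | app {Γ t u A B} : Typing le Γ t (.arrow A B) → Typing le Γ u A → Typing le Γ (.app t u) B
  | pair {Γ t u A B} : Typing le Γ t A → Typing le Γ u B → Typing le Γ (.pair t u) (.prod A B)
  | proj1 {Γ t A B} : Typing le Γ t (.prod A B) → Typing le Γ (.fst t) A
  | proj2 {Γ t A B} : Typing le Γ t (.prod A B) → Typing le Γ (.snd t) B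

/-- The kernel properties of a subtyping relation: preorder with `∩` a
greatest lower bound and `Ω` a top element. -/
structure KernelAxioms {X : Type} (le : Ty X → Ty X → Prop) : Prop where
  refl : ∀ A, le A A
  trans : ∀ {A B C}, le A B → le B C → le A C
  inter_l1 : ∀ A B, le (.inter A B) A
  inter_l2 : ∀ A B, le (.inter A B) B
  inter_r : ∀ {A B C}, le C A → le C B → le C (.inter A B)
  omega_r : ∀ A, le A .omega

/-- Iterated intersection `A₁ ∩ … ∩ Aₙ` of a list of types, the empty
intersection being `Ω`. -/
def interList {X : Type} : List (Ty X) → Ty X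
  | [] => .omega
  | [A] => A
  | A :: l => .inter A (interList l)

/-- β-reduction: the congruence closure of `(λx.t) u → t[u/x]`. -/
inductive Beta : Tm → Tm → Prop
  | beta (x : ℕ) (t u : Tm) : Beta (.app (.lam x t) u) (t.subst x u)
  | lam {t t'} (x : ℕ) : Beta t t' → Beta (.lam x t) (.lam x t')
  | appL {t t'} (u : Tm) : Beta t t' → Beta (.app t u) (.app t' u)
  | appR {u u'} (t : Tm) : Beta u u' → Beta (.app t u) (.app t u')
  | pairL {t t'} (u : Tm) : Beta t t' → Beta (.pair t u) (.pair t' u)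
  | pairR {u u'} (t : Tm) : Beta u u' → Beta (.pair t u) (.pair t u')
  | fst {t t'} : Beta t t' → Beta (.fst t) (.fst t')
  | snd {t t'} : Beta t t' → Beta (.snd t) (.snd t')

/-- π-reduction: the congruence closure of `π₁⟨t,u⟩ → t` and `π₂⟨t,u⟩ → u`. -/
inductive Pi : Tm → Tm → Prop
  | fstPair (t u : Tm) : Pi (.fst (.pair t u)) t
  | sndPair (t u : Tm) : Pi (.snd (.pair t u)) u
  | lam {t t'} (x : ℕ) : Pi t t' → Pi (.lam x t) (.lam x t')
  | appL {t t'} (u : Tm) : Pi t t' → Pi (.app t u) (.app t' u)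
  | appR {u u'} (t : Tm) : Pi u u' → Pi (.app t u) (.app t u')
  | pairL {t t'} (u : Tm) : Pi t t' → Pi (.pair t u) (.pair t' u)
  | pairR {u u'} (t : Tm) : Pi u u' → Pi (.pair t u) (.pair t u')
  | fst {t t'} : Pi t t' → Pi (.fst t) (.fst t')
  | snd {t t'} : Pi t t' → Pi (.snd t) (.snd t')

theorem Typing.le_of_var {X : Type} {le : Ty X → Ty X → Prop} (hker : KernelAxioms le)
    {Γ : List (ℕ × Ty X)} {x : ℕ} {A B : Ty X} (hΓ : ∀ C, (x, C) ∈ Γ → le B C)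
    (h : Typing le Γ (.var x) A) : le B A := by
  generalize ht : Tm.var x = t at h
  induction h with
  | var _ _ _ C =>
    cases ht
    exact hΓ C (by simp)
  | sub _ hle ih => exact hker.trans (ih hΓ ht) hle
  | inter _ _ ih₁ ih₂ => exact hker.inter_r (ih₁ hΓ ht) (ih₂ hΓ ht)
  | omega => exact hker.omega_r B
  | abs | app | pair | proj1 | proj2 => cases ht

theorem generation_var_general {X : Type} {le : Ty X → Ty X → Prop}
    (hker : KernelAxioms le) {Γ : List (ℕ × Ty X)} {x : ℕ} {A B : Ty X}
    (hnd : (Γ.map Prod.fst).Nodup) (hmem : (x, B) ∈ Γ)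
    (h : Typing le Γ (.var x) A) :
    le B A := by
  refine h.le_of_var hker fun C hC => ?_
  obtain rfl : B = C := congrArg Prod.snd (List.inj_on_of_nodup_map hnd hmem hC rfl)
  exact hker.refl B

/-- Generation for variables: if `Γ ⊢ x : A` with the declarations of `Γ`
binding pairwise distinct variables and `x:B ∈ Γ`, then `B ≤ A`. -/
theorem generation_var {X : Type} [Countable X] {le : Ty X → Ty X → Prop}
    (hker : KernelAxioms le) {Γ : List (ℕ × Ty X)} {x : ℕ} {A B : Ty X}
    (hnd : (Γ.map Prod.fst).Nodup) (hmem : (x, B) ∈ Γ)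
    (h : Typing le Γ (.var x) A) :
    le B A :=
  generation_var_general hker hnd hmem h
end

section
/- Generation for application: Let ≤ be a binary relation on types satisfying the kernel axioms. If Γ ⊢ t u : B is derivable, then there exist n ≥ 0 and types A₁,…,Aₙ and B₁,…,Bₙ such that B₁∩…∩Bₙ ≤ B (the empty intersection for n = 0 being Ω) and, for each 1 ≤ i ≤ n, both Γ ⊢ t : Aᵢ→Bᵢ and Γ ⊢ u : Aᵢ are derivable. -/
lemma interList_cons_le1 {X : Type} {le : Ty X → Ty X → Prop} (hker : KernelAxioms le)
    (A : Ty X) (L : List (Ty X)) : le (interList (A :: L)) A := by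
  cases L with
  | nil => exact hker.refl A
  | cons B L' => exact hker.inter_l1 _ _

lemma interList_cons_le2 {X : Type} {le : Ty X → Ty X → Prop} (hker : KernelAxioms le)
    (A : Ty X) (L : List (Ty X)) : le (interList (A :: L)) (interList L) := by
  cases L with
  | nil => exact hker.omega_r _
  | cons B L' => exact hker.inter_l2 _ _

lemma interList_cons_le_of {X : Type} {le : Ty X → Ty X → Prop} (hker : KernelAxioms le)
    {C A : Ty X} {L : List (Ty X)} (h1 : le C A) (h2 : le C (interList L)) :
    le C (interList (A :: L)) := by
  cases L with
  | nil => exact h1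
  | cons B L' => exact hker.inter_r h1 h2

lemma interList_append_le1 {X : Type} {le : Ty X → Ty X → Prop} (hker : KernelAxioms le)
    (L1 L2 : List (Ty X)) : le (interList (L1 ++ L2)) (interList L1) := by
  induction L1 with
  | nil => exact hker.omega_r _
  | cons A L1' ih =>
      exact interList_cons_le_of hker (interList_cons_le1 hker A (L1' ++ L2))
        (hker.trans (interList_cons_le2 hker A (L1' ++ L2)) ih)

lemma interList_append_le2 {X : Type} {le : Ty X → Ty X → Prop} (hker : KernelAxioms le)
    (L1 L2 : List (Ty X)) : le (interList (L1 ++ L2)) (interList L2) := by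
  induction L1 with
  | nil => exact hker.refl _
  | cons A L1' ih => exact hker.trans (interList_cons_le2 hker A (L1' ++ L2)) ih

/-- Generation for application: if `Γ ⊢ t u : B` then there is a finite family
`(Aᵢ, Bᵢ)` with `⋂ᵢ Bᵢ ≤ B` and, for each `i`, `Γ ⊢ t : Aᵢ → Bᵢ` and `Γ ⊢ u : Aᵢ`. -/
theorem generation_app {X : Type} [Countable X] {le : Ty X → Ty X → Prop}
    (hker : KernelAxioms le) {Γ : List (ℕ × Ty X)} {t u : Tm} {B : Ty X}
    (h : Typing le Γ (.app t u) B) :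
    ∃ l : List (Ty X × Ty X),
      le (interList (l.map Prod.snd)) B ∧
      ∀ p ∈ l, Typing le Γ t (.arrow p.1 p.2) ∧ Typing le Γ u p.1 := by
  generalize ht : Tm.app t u = s at h
  induction h with
  | var => cases ht
  | sub h1 hle ih =>
      obtain ⟨l, h1, h2⟩ := ih ht
      exact ⟨l, hker.trans h1 hle, h2⟩
  | inter h1 h2 ih1 ih2 =>
      obtain ⟨l1, hl1, hp1⟩ := ih1 ht
      obtain ⟨l2, hl2, hp2⟩ := ih2 ht
      refine ⟨l1 ++ l2, ?_, ?_⟩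
      · rw [List.map_append]
        exact hker.inter_r
          (hker.trans (interList_append_le1 hker _ _) hl1)
          (hker.trans (interList_append_le2 hker _ _) hl2)
      · intro p hp
        rcases List.mem_append.mp hp with h | h
        · exact hp1 p h
        · exact hp2 p h
  | omega =>
      exact ⟨[], hker.refl _, by simp⟩
  | abs _ => cases ht
  | app h1 h2 =>
      cases ht
      exact ⟨[(_, _)], hker.refl _, by
        intro p hp; simp at hp; subst hp; exact ⟨h1, h2⟩⟩
  | pair => cases ht
  | proj1 => cases ht
  | proj2 => cases ht
end

section
/- Generation for abstraction: Let ≤ be a binary relation on types satisfying the kernel axioms. If Γ ⊢ λx.t : A is derivable, then there exist n ≥ 0 and types B₁,…,Bₙ and C₁,…,Cₙ such that (B₁→C₁)∩…∩(Bₙ→Cₙ) ≤ A (the empty intersection for n = 0 being Ω) and, for each 1 ≤ i ≤ n, Γ,x:Bᵢ ⊢ t : Cᵢ is derivable. -/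
lemma interList_le_mem {X : Type} {le : Ty X → Ty X → Prop} (hker : KernelAxioms le) :
    ∀ (l : List (Ty X)) (A : Ty X), A ∈ l → le (interList l) A := by
  intro l
  induction l with
  | nil => intro A hA; cases hA
  | cons B l ih =>
    intro A hA
    cases l with
    | nil => simp at hA; subst hA; exact hker.refl _
    | cons C l' =>
      rcases List.mem_cons.mp hA with h | h
      · subst h; exact hker.inter_l1 _ _
      · exact hker.trans (hker.inter_l2 _ _) (ih _ h)

lemma le_interList {X : Type} {le : Ty X → Ty X → Prop} (hker : KernelAxioms le) :
    ∀ (l : List (Ty X)) (C : Ty X), (∀ A ∈ l, le C A) → le C (interList l) := by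
  intro l
  induction l with
  | nil => intro C _; exact hker.omega_r _
  | cons B l ih =>
    intro C h
    cases l with
    | nil => exact h B (by simp)
    | cons D l' =>
      exact hker.inter_r (h B (by simp)) (ih C (fun A hA => h A (by simp [hA])))

lemma interList_append_le_left {X : Type} {le : Ty X → Ty X → Prop} (hker : KernelAxioms le)
    (l₁ l₂ : List (Ty X)) : le (interList (l₁ ++ l₂)) (interList l₁) :=
  le_interList hker _ _ (fun A hA => interList_le_mem hker _ _ (by simp [hA]))

lemma interList_append_le_right {X : Type} {le : Ty X → Ty X → Prop} (hker : KernelAxioms le)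
    (l₁ l₂ : List (Ty X)) : le (interList (l₁ ++ l₂)) (interList l₂) :=
  le_interList hker _ _ (fun A hA => interList_le_mem hker _ _ (by simp [hA]))

/-- Generation for abstraction: if `Γ ⊢ λx.t : A` then there is a finite family
`(Bᵢ, Cᵢ)` with `⋂ᵢ (Bᵢ → Cᵢ) ≤ A` and, for each `i`, `Γ, x:Bᵢ ⊢ t : Cᵢ`. -/
theorem generation_abs {X : Type} [Countable X] {le : Ty X → Ty X → Prop}
    (hker : KernelAxioms le) {Γ : List (ℕ × Ty X)} {x : ℕ} {t : Tm} {A : Ty X}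
    (h : Typing le Γ (.lam x t) A) :
    ∃ l : List (Ty X × Ty X),
      le (interList (l.map fun p => Ty.arrow p.1 p.2)) A ∧
      ∀ p ∈ l, Typing le (Γ ++ [(x, p.1)]) t p.2 := by
  generalize hE : Tm.lam x t = s at h
  induction h with
  | var => cases hE
  | sub h hle ih =>
    obtain ⟨l, h1, h2⟩ := ih hE
    exact ⟨l, hker.trans h1 hle, h2⟩
  | inter h1 h2 ih1 ih2 =>
    obtain ⟨l₁, hl1, hl1'⟩ := ih1 hE
    obtain ⟨l₂, hl2, hl2'⟩ := ih2 hE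
    refine ⟨l₁ ++ l₂, ?_, ?_⟩
    · rw [List.map_append]
      exact hker.inter_r
        (hker.trans (interList_append_le_left hker _ _) hl1)
        (hker.trans (interList_append_le_right hker _ _) hl2)
    · intro p hp
      rcases List.mem_append.mp hp with h | h
      · exact hl1' p h
      · exact hl2' p h
  | omega => exact ⟨[], hker.omega_r _, by simp⟩
  | abs h _ =>
    cases hE
    exact ⟨[(_, _)], hker.refl _, by simpa using h⟩
  | app _ _ _ _ => cases hE
  | pair _ _ _ _ => cases hE
  | proj1 _ _ => cases hE
  | proj2 _ _ => cases hE
end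

section
/- Generation for pairing: Let ≤ be a binary relation on types satisfying the kernel axioms. If Γ ⊢ ⟨t,u⟩ : A is derivable, then there exist n ≥ 0 and types B₁,…,Bₙ and C₁,…,Cₙ such that (B₁×C₁)∩…∩(Bₙ×Cₙ) ≤ A (the empty intersection for n = 0 being Ω) and, for each 1 ≤ i ≤ n, both Γ ⊢ t : Bᵢ and Γ ⊢ u : Cᵢ are derivable. -/
theorem interList_append_le {X : Type} {le : Ty X → Ty X → Prop}
    (hker : KernelAxioms le) (l1 l2 : List (Ty X)) :
    le (interList (l1 ++ l2)) (interList l1) ∧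
    le (interList (l1 ++ l2)) (interList l2) := by
  induction l1 with
  | nil => exact ⟨hker.omega_r _, hker.refl _⟩
  | cons a l ih =>
    cases l with
    | nil =>
      cases l2 with
      | nil => exact ⟨hker.refl _, hker.omega_r _⟩
      | cons b l2' => exact ⟨hker.inter_l1 _ _, hker.inter_l2 _ _⟩
    | cons c l' =>
      refine ⟨hker.inter_r (hker.inter_l1 _ _)
        (hker.trans (hker.inter_l2 _ _) ih.1),
        hker.trans (hker.inter_l2 _ _) ih.2⟩

/-- Generation for pairing: if `Γ ⊢ ⟨t,u⟩ : A` then there is a finite family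
`(Bᵢ, Cᵢ)` with `⋂ᵢ (Bᵢ × Cᵢ) ≤ A` and, for each `i`, `Γ ⊢ t : Bᵢ` and `Γ ⊢ u : Cᵢ`. -/
theorem generation_pair {X : Type} [Countable X] {le : Ty X → Ty X → Prop}
    (hker : KernelAxioms le) {Γ : List (ℕ × Ty X)} {t u : Tm} {A : Ty X}
    (h : Typing le Γ (.pair t u) A) :
    ∃ l : List (Ty X × Ty X),
      le (interList (l.map fun p => Ty.prod p.1 p.2)) A ∧
      ∀ p ∈ l, Typing le Γ t p.1 ∧ Typing le Γ u p.2 := by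
  generalize ht : Tm.pair t u = s at h
  induction h with
  | var => cases ht
  | sub h hle ih => obtain ⟨l, h1, h2⟩ := ih ht; exact ⟨l, hker.trans h1 hle, h2⟩
  | inter h1 h2 ih1 ih2 =>
    obtain ⟨l1, hl1, hp1⟩ := ih1 ht
    obtain ⟨l2, hl2, hp2⟩ := ih2 ht
    refine ⟨l1 ++ l2, ?_, ?_⟩
    · rw [List.map_append]
      exact hker.inter_r
        (hker.trans (interList_append_le hker _ _).1 hl1)
        (hker.trans (interList_append_le hker _ _).2 hl2)
    · intro p hp
      rcases List.mem_append.1 hp with h | h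
      · exact hp1 p h
      · exact hp2 p h
  | omega => exact ⟨[], hker.refl _, by simp⟩
  | abs _ _ => cases ht
  | app _ _ _ _ => cases ht
  | pair h1 h2 _ _ =>
    cases ht
    exact ⟨[(_, _)], hker.refl _, by simpa using ⟨h1, h2⟩⟩
  | proj1 _ _ => cases ht
  | proj2 _ _ => cases ht
end

section
/- Subject reduction for products: Let ≤ be a binary relation on types satisfying the kernel axioms and the product-inversion property (×≤×): for every finite family (Aᵢ×Bᵢ)_{i∈I} and types A, B, if ⋂_{i∈I}(Aᵢ×Bᵢ) ≤ A×B then ⋂_{i∈I}Aᵢ ≤ A and ⋂_{i∈I}Bᵢ ≤ B (the empty intersection being Ω). If t₁ →π t₂ and Γ ⊢ t₁ : A is derivable, then Γ ⊢ t₂ : A is derivable. -/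
section Aux
variable {X : Type} {le : Ty X → Ty X → Prop}

lemma le_interList_cons (hker : KernelAxioms le) (A : Ty X) (l : List (Ty X)) :
    le (interList (A :: l)) A ∧ le (interList (A :: l)) (interList l) := by
  cases l with
  | nil => exact ⟨hker.refl A, hker.omega_r A⟩
  | cons B l => exact ⟨hker.inter_l1 _ _, hker.inter_l2 _ _⟩

lemma le_interList_append (hker : KernelAxioms le) (l₁ l₂ : List (Ty X)) :
    le (interList (l₁ ++ l₂)) (interList l₁) ∧ le (interList (l₁ ++ l₂)) (interList l₂) := by
  induction l₁ with
  | nil => exact ⟨hker.omega_r _, hker.refl _⟩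
  | cons A l ih =>
    obtain ⟨h1, h2⟩ := le_interList_cons hker A (l ++ l₂)
    refine ⟨?_, hker.trans h2 ih.2⟩
    cases l with
    | nil => exact h1
    | cons B l' => exact hker.inter_r h1 (hker.trans h2 ih.1)

lemma typing_interList (Γ : List (ℕ × Ty X)) (t : Tm) (l : List (Ty X))
    (h : ∀ A ∈ l, Typing le Γ t A) : Typing le Γ t (interList l) := by
  induction l with
  | nil => exact .omega Γ t
  | cons A l ih =>
    cases l with
    | nil => exact h A (by simp)
    | cons B l' =>
      exact .inter (h A (by simp)) (ih fun C hC => h C (by simp [hC]))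

lemma pair_inv (hker : KernelAxioms le) {Γ : List (ℕ × Ty X)} {s : Tm} {C : Ty X}
    (ht : Typing le Γ s C) :
    ∀ t u, s = .pair t u →
    ∃ l : List (Ty X × Ty X),
      le (interList (l.map fun p => Ty.prod p.1 p.2)) C ∧
      (∀ p ∈ l, Typing le Γ t p.1 ∧ Typing le Γ u p.2) := by
  induction ht with
  | var => intro t u h; cases h
  | sub h hle ih =>
    intro t u h
    obtain ⟨l, h1, h2⟩ := ih t u h
    exact ⟨l, hker.trans h1 hle, h2⟩
  | inter h1 h2 ih1 ih2 =>
    intro t u h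
    obtain ⟨l1, ha1, ha2⟩ := ih1 t u h
    obtain ⟨l2, hb1, hb2⟩ := ih2 t u h
    refine ⟨l1 ++ l2, ?_, ?_⟩
    · rw [List.map_append]
      exact hker.inter_r (hker.trans (le_interList_append hker _ _).1 ha1)
        (hker.trans (le_interList_append hker _ _).2 hb1)
    · intro p hp
      rcases List.mem_append.1 hp with h' | h'
      exacts [ha2 p h', hb2 p h']
  | omega Γ t => intro t u h; exact ⟨[], hker.refl _, by simp⟩
  | abs _ _ => intro t u h; cases h
  | app _ _ _ _ => intro t u h; cases h
  | @pair _ _ _ A B h1 h2 _ _ =>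
    intro t u h
    injection h with e1 e2
    subst e1; subst e2
    refine ⟨[(A, B)], hker.refl _, ?_⟩
    intro p hp
    simp at hp
    subst hp
    exact ⟨h1, h2⟩
  | proj1 _ _ => intro t u h; cases h
  | proj2 _ _ => intro t u h; cases h

end Aux

/-- Subject reduction for π: if `≤` satisfies the kernel axioms and the
product-inversion property (×≤×), `t₁ →π t₂` and `Γ ⊢ t₁ : A`, then `Γ ⊢ t₂ : A`. -/
theorem subject_reduction_pi {X : Type} [Countable X] {le : Ty X → Ty X → Prop}
    (hker : KernelAxioms le)
    (hinv : ∀ (l : List (Ty X × Ty X)) (A B : Ty X),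
      le (interList (l.map fun p => Ty.prod p.1 p.2)) (Ty.prod A B) →
      le (interList (l.map Prod.fst)) A ∧ le (interList (l.map Prod.snd)) B)
    {t₁ t₂ : Tm} (hred : Pi t₁ t₂) {Γ : List (ℕ × Ty X)} {A : Ty X}
    (ht : Typing le Γ t₁ A) :
    Typing le Γ t₂ A := by
  revert t₂
  induction ht with
  | var => intro t₂ hred; cases hred
  | sub h hle ih => intro t₂ hred; exact .sub (ih hred) hle
  | inter h1 h2 ih1 ih2 => intro t₂ hred; exact .inter (ih1 hred) (ih2 hred)
  | omega => intro t₂ _; exact .omega _ _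
  | abs h ih =>
    intro t₂ hred
    cases hred with
    | lam x hr => exact .abs (ih hr)
  | app h1 h2 ih1 ih2 =>
    intro t₂ hred
    cases hred with
    | appL u hr => exact .app (ih1 hr) h2
    | appR t hr => exact .app h1 (ih2 hr)
  | pair h1 h2 ih1 ih2 =>
    intro t₂ hred
    cases hred with
    | pairL u hr => exact .pair (ih1 hr) h2
    | pairR t hr => exact .pair h1 (ih2 hr)
  | proj1 h ih =>
    intro t₂ hred
    cases hred with
    | fst hr => exact .proj1 (ih hr)
    | fstPair a b =>
      obtain ⟨l, h1, h2⟩ := pair_inv hker h _ _ rfl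
      obtain ⟨hA, _⟩ := hinv l _ _ h1
      refine .sub (typing_interList _ _ _ ?_) hA
      intro C hC
      simp only [List.mem_map] at hC
      obtain ⟨p, hp, rfl⟩ := hC
      exact (h2 p hp).1
  | proj2 h ih =>
    intro t₂ hred
    cases hred with
    | snd hr => exact .proj2 (ih hr)
    | sndPair a b =>
      obtain ⟨l, h1, h2⟩ := pair_inv hker h _ _ rfl
      obtain ⟨_, hB⟩ := hinv l _ _ h1
      refine .sub (typing_interList _ _ _ ?_) hB
      intro C hC
      simp only [List.mem_map] at hC
      obtain ⟨p, hp, rfl⟩ := hC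
      exact (h2 p hp).2
end

section
/- Subject expansion for products: Let ≤ be a binary relation on types satisfying the kernel axioms. If t₁ →π t₂ and Γ ⊢ t₂ : A is derivable, then Γ ⊢ t₁ : A is derivable. -/
section Expand

variable {X : Type} {le : Ty X → Ty X → Prop}

lemma expand_lam {Γ s A} (ht : Typing le Γ s A) : ∀ x t t', s = .lam x t' →
    (∀ Γ A, Typing le Γ t' A → Typing le Γ t A) → Typing le Γ (.lam x t) A := by
  induction ht with
  | var => exact fun _ _ _ hs _ => Tm.noConfusion hs
  | sub h hle ih => exact fun x t t' hs IH => .sub (ih x t t' hs IH) hle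
  | inter h1 h2 ih1 ih2 => exact fun x t t' hs IH => .inter (ih1 x t t' hs IH) (ih2 x t t' hs IH)
  | omega Γ _ => exact fun x t t' _ _ => .omega Γ _
  | abs h _ =>
    intro x t t' hs IH
    injection hs with h1 h2; subst h1; subst h2
    exact .abs (IH _ _ h)
  | app h1 h2 _ _ => exact fun _ _ _ hs _ => Tm.noConfusion hs
  | pair h1 h2 _ _ => exact fun _ _ _ hs _ => Tm.noConfusion hs
  | proj1 h _ => exact fun _ _ _ hs _ => Tm.noConfusion hs
  | proj2 h _ => exact fun _ _ _ hs _ => Tm.noConfusion hs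

lemma expand_app {Γ s A} (ht : Typing le Γ s A) : ∀ t t' u u', s = .app t' u' →
    (∀ Γ A, Typing le Γ t' A → Typing le Γ t A) →
    (∀ Γ A, Typing le Γ u' A → Typing le Γ u A) → Typing le Γ (.app t u) A := by
  induction ht with
  | var => exact fun _ _ _ _ hs _ _ => Tm.noConfusion hs
  | sub h hle ih => exact fun t t' u u' hs IH1 IH2 => .sub (ih t t' u u' hs IH1 IH2) hle
  | inter h1 h2 ih1 ih2 =>
    exact fun t t' u u' hs IH1 IH2 => .inter (ih1 t t' u u' hs IH1 IH2) (ih2 t t' u u' hs IH1 IH2)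
  | omega Γ _ => exact fun _ _ _ _ _ _ _ => .omega Γ _
  | abs h _ => exact fun _ _ _ _ hs _ _ => Tm.noConfusion hs
  | app h1 h2 _ _ =>
    intro t t' u u' hs IH1 IH2
    injection hs with e1 e2; subst e1; subst e2
    exact .app (IH1 _ _ h1) (IH2 _ _ h2)
  | pair h1 h2 _ _ => exact fun _ _ _ _ hs _ _ => Tm.noConfusion hs
  | proj1 h _ => exact fun _ _ _ _ hs _ _ => Tm.noConfusion hs
  | proj2 h _ => exact fun _ _ _ _ hs _ _ => Tm.noConfusion hs

lemma expand_pair {Γ s A} (ht : Typing le Γ s A) : ∀ t t' u u', s = .pair t' u' →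
    (∀ Γ A, Typing le Γ t' A → Typing le Γ t A) →
    (∀ Γ A, Typing le Γ u' A → Typing le Γ u A) → Typing le Γ (.pair t u) A := by
  induction ht with
  | var => exact fun _ _ _ _ hs _ _ => Tm.noConfusion hs
  | sub h hle ih => exact fun t t' u u' hs IH1 IH2 => .sub (ih t t' u u' hs IH1 IH2) hle
  | inter h1 h2 ih1 ih2 =>
    exact fun t t' u u' hs IH1 IH2 => .inter (ih1 t t' u u' hs IH1 IH2) (ih2 t t' u u' hs IH1 IH2)
  | omega Γ _ => exact fun _ _ _ _ _ _ _ => .omega Γ _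
  | abs h _ => exact fun _ _ _ _ hs _ _ => Tm.noConfusion hs
  | app h1 h2 _ _ => exact fun _ _ _ _ hs _ _ => Tm.noConfusion hs
  | pair h1 h2 _ _ =>
    intro t t' u u' hs IH1 IH2
    injection hs with e1 e2; subst e1; subst e2
    exact .pair (IH1 _ _ h1) (IH2 _ _ h2)
  | proj1 h _ => exact fun _ _ _ _ hs _ _ => Tm.noConfusion hs
  | proj2 h _ => exact fun _ _ _ _ hs _ _ => Tm.noConfusion hs

lemma expand_fst {Γ s A} (ht : Typing le Γ s A) : ∀ t t', s = .fst t' →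
    (∀ Γ A, Typing le Γ t' A → Typing le Γ t A) → Typing le Γ (.fst t) A := by
  induction ht with
  | var => exact fun _ _ hs _ => Tm.noConfusion hs
  | sub h hle ih => exact fun t t' hs IH => .sub (ih t t' hs IH) hle
  | inter h1 h2 ih1 ih2 => exact fun t t' hs IH => .inter (ih1 t t' hs IH) (ih2 t t' hs IH)
  | omega Γ _ => exact fun _ _ _ _ => .omega Γ _
  | abs h _ => exact fun _ _ hs _ => Tm.noConfusion hs
  | app h1 h2 _ _ => exact fun _ _ hs _ => Tm.noConfusion hs
  | pair h1 h2 _ _ => exact fun _ _ hs _ => Tm.noConfusion hs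
  | proj1 h _ =>
    intro t t' hs IH
    injection hs with e1; subst e1
    exact .proj1 (IH _ _ h)
  | proj2 h _ => exact fun _ _ hs _ => Tm.noConfusion hs

lemma expand_snd {Γ s A} (ht : Typing le Γ s A) : ∀ t t', s = .snd t' →
    (∀ Γ A, Typing le Γ t' A → Typing le Γ t A) → Typing le Γ (.snd t) A := by
  induction ht with
  | var => exact fun _ _ hs _ => Tm.noConfusion hs
  | sub h hle ih => exact fun t t' hs IH => .sub (ih t t' hs IH) hle
  | inter h1 h2 ih1 ih2 => exact fun t t' hs IH => .inter (ih1 t t' hs IH) (ih2 t t' hs IH)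
  | omega Γ _ => exact fun _ _ _ _ => .omega Γ _
  | abs h _ => exact fun _ _ hs _ => Tm.noConfusion hs
  | app h1 h2 _ _ => exact fun _ _ hs _ => Tm.noConfusion hs
  | pair h1 h2 _ _ => exact fun _ _ hs _ => Tm.noConfusion hs
  | proj1 h _ => exact fun _ _ hs _ => Tm.noConfusion hs
  | proj2 h _ =>
    intro t t' hs IH
    injection hs with e1; subst e1
    exact .proj2 (IH _ _ h)

end Expand

/-- Subject expansion for π: if `≤` satisfies the kernel axioms,
`t₁ →π t₂` and `Γ ⊢ t₂ : A`, then `Γ ⊢ t₁ : A`. -/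
theorem subject_expansion_pi {X : Type} [Countable X] {le : Ty X → Ty X → Prop}
    (hker : KernelAxioms le)
    {t₁ t₂ : Tm} (hred : Pi t₁ t₂) {Γ : List (ℕ × Ty X)} {A : Ty X}
    (ht : Typing le Γ t₂ A) :
    Typing le Γ t₁ A := by
  induction hred generalizing Γ A with
  | fstPair t u => exact .proj1 (.pair ht (.omega Γ u))
  | sndPair t u => exact .proj2 (.pair (.omega Γ t) ht)
  | lam x h ih => exact expand_lam ht x _ _ rfl fun _ _ => ih
  | appL u h ih => exact expand_app ht _ _ u u rfl (fun _ _ => ih) (fun _ _ h => h)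
  | appR t h ih => exact expand_app ht t t _ _ rfl (fun _ _ h => h) (fun _ _ => ih)
  | pairL u h ih => exact expand_pair ht _ _ u u rfl (fun _ _ => ih) (fun _ _ h => h)
  | pairR t h ih => exact expand_pair ht t t _ _ rfl (fun _ _ h => h) (fun _ _ => ih)
  | fst h ih => exact expand_fst ht _ _ rfl fun _ _ => ih
  | snd h ih => exact expand_snd ht _ _ rfl fun _ _ => ih
end

section
/- Admissibility of contraction in ISC: If Γ,A,A,Δ ⊢ C is derivable in ISC, then Γ,A,Δ ⊢ C is derivable in ISC. -/
/-- Types built from intersection and a set `K` of type constructors, each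
`κ : K` having contravariant arity `c κ` and covariant arity `v κ`. -/
inductive GTy (K : Type) (c v : K → ℕ) : Type
  | inter : GTy K c v → GTy K c v → GTy K c v
  | cons : (κ : K) → (Fin (c κ) → GTy K c v) → (Fin (v κ) → GTy K c v) → GTy K c v

/-- The sequent-style subtyping system ISC, parameterized by the width
function `w` (valued in {0,1}). Sequents `Γ ⊢ A` with `Γ` a list of types. -/
inductive ISC {K : Type} {c v : K → ℕ} (w : K → ℕ) : List (GTy K c v) → GTy K c v → Prop
  | wk {Γ Δ : List (GTy K c v)} {C : GTy K c v} (κ : K)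
      (f : Fin (c κ) → GTy K c v) (g : Fin (v κ) → GTy K c v) :
      ISC w (Γ ++ Δ) C → ISC w (Γ ++ GTy.cons κ f g :: Δ) C
  | interR {Γ : List (GTy K c v)} {A B : GTy K c v} :
      ISC w Γ A → ISC w Γ B → ISC w Γ (GTy.inter A B)
  | interL {Γ Δ : List (GTy K c v)} {A B C : GTy K c v} :
      ISC w (Γ ++ A :: B :: Δ) C → ISC w (Γ ++ GTy.inter A B :: Δ) C
  | constr (κ : K) (k : ℕ) (hk : w κ ≤ k)
      (As : Fin (c κ) → Fin k → GTy K c v) (Bs : Fin (v κ) → Fin k → GTy K c v)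
      (A : Fin (c κ) → GTy K c v) (B : Fin (v κ) → GTy K c v) :
      (∀ j i, ISC w [A j] (As j i)) →
      (∀ j, ISC w (List.ofFn (Bs j)) (B j)) →
      ISC w (List.ofFn fun i => GTy.cons κ (fun j => As j i) (fun j => Bs j i))
        (GTy.cons κ A B)

/-! Splitting every intersection in a context leaves a list of constructor types, its atoms.
Whether `Γ ⊢ C` is derivable depends only on the *set* of atoms of `Γ`: it is equivalent to
derivability in a system that consults the context only through membership, where contraction is
trivial. Going back, a `(constr)` step may use one atom several times; using every matching atom of
the context once instead still meets the width condition, because `w κ ≤ 1`. -/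

namespace GTy

variable {K : Type} {c v : K → ℕ}

def atoms : GTy K c v → List (GTy K c v)
  | .inter A B => A.atoms ++ B.atoms
  | .cons κ f g => [.cons κ f g]

def ctxAtoms (Γ : List (GTy K c v)) : List (GTy K c v) := Γ.flatMap atoms

@[simp] lemma ctxAtoms_nil : ctxAtoms ([] : List (GTy K c v)) = [] := rfl

@[simp] lemma ctxAtoms_cons (A : GTy K c v) (Γ : List (GTy K c v)) :
    ctxAtoms (A :: Γ) = A.atoms ++ ctxAtoms Γ := rfl

@[simp] lemma ctxAtoms_append (Γ Δ : List (GTy K c v)) :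
    ctxAtoms (Γ ++ Δ) = ctxAtoms Γ ++ ctxAtoms Δ :=
  List.flatMap_append

lemma mem_ctxAtoms {x : GTy K c v} {Γ : List (GTy K c v)} :
    x ∈ ctxAtoms Γ ↔ ∃ A ∈ Γ, x ∈ A.atoms :=
  List.mem_flatMap

lemma ctxAtoms_subset_ctxAtoms {Γ Δ : List (GTy K c v)} (h : Γ ⊆ Δ) :
    ctxAtoms Γ ⊆ ctxAtoms Δ := fun _ hx =>
  let ⟨A, hA, hxA⟩ := mem_ctxAtoms.1 hx
  mem_ctxAtoms.2 ⟨A, h hA, hxA⟩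

end GTy

lemma List.exists_ofFn_comp_sublist {α : Type*} (L : List α) {k : ℕ} (f : Fin k → α) :
    ∃ (k' : ℕ) (σ : Fin k' → Fin k),
      (List.ofFn (f ∘ σ)).Sublist L ∧ ∀ i, f i ∈ L → ∃ q, f (σ q) = f i := by
  classical
  set L' := L.filter fun x => ∃ i, f i = x
  have hL' : ∀ q : Fin L'.length, ∃ i, f i = L'.get q := fun q => by
    simpa using (List.mem_filter.1 (L'.get_mem q)).2
  choose σ hσ using hL'
  refine ⟨L'.length, σ, ?_, fun i hi => ?_⟩
  · have hofFn : List.ofFn (f ∘ σ) = L' := by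
      conv_rhs => rw [← List.ofFn_get L']
      exact congrArg List.ofFn (funext hσ)
    rw [hofFn]
    exact List.filter_sublist
  · obtain ⟨q, hq⟩ := List.get_of_mem (List.mem_filter.2 ⟨hi, by simp⟩ : f i ∈ L')
    exact ⟨q, (hσ q).trans hq⟩

namespace ISC

open GTy

variable {K : Type} {c v : K → ℕ} {w : K → ℕ}

lemma weaken (X : GTy K c v) {Γ Δ : List (GTy K c v)} {C : GTy K c v}
    (h : ISC w (Γ ++ Δ) C) : ISC w (Γ ++ X :: Δ) C := by
  induction X generalizing Δ with
  | cons κ f g => exact wk κ f g h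
  | inter A B ihA ihB => exact interL (ihA (ihB h))

lemma weaken_of_sublist {L' L : List (GTy K c v)} (hL : L'.Sublist L)
    {Γ : List (GTy K c v)} {C : GTy K c v} (h : ISC w (Γ ++ L') C) : ISC w (Γ ++ L) C := by
  induction hL generalizing Γ with
  | slnil => exact h
  | cons X _ ih => exact weaken X (ih h)
  | cons_cons X _ ih =>
    simpa using ih (Γ := Γ ++ [X]) (by simpa using h)

lemma of_atoms (X : GTy K c v) {Γ Δ : List (GTy K c v)} {C : GTy K c v}
    (h : ISC w (Γ ++ X.atoms ++ Δ) C) : ISC w (Γ ++ X :: Δ) C := by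
  induction X generalizing Γ Δ with
  | cons κ f g => simpa [atoms] using h
  | inter A B ihA ihB =>
    refine interL (ihA (Δ := B :: Δ) ?_)
    simpa using ihB (Γ := Γ ++ A.atoms) (by simpa [atoms] using h)

lemma of_ctxAtoms (Θ : List (GTy K c v)) {Γ : List (GTy K c v)} {C : GTy K c v}
    (h : ISC w (Γ ++ ctxAtoms Θ) C) : ISC w (Γ ++ Θ) C := by
  induction Θ generalizing Γ with
  | nil => simpa using h
  | cons X Θ ih =>
    have hX : ISC w (Γ ++ X :: ctxAtoms Θ) C := of_atoms X (by simpa using h)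
    simpa using ih (Γ := Γ ++ [X]) (by simpa using hX)

variable (w) in
inductive FromAtoms : List (GTy K c v) → GTy K c v → Prop
  | inter {S : List (GTy K c v)} {A B : GTy K c v} :
      FromAtoms S A → FromAtoms S B → FromAtoms S (.inter A B)
  | cons {S : List (GTy K c v)} (κ : K) (k : ℕ) (hk : w κ ≤ k)
      (As : Fin (c κ) → Fin k → GTy K c v) (Bs : Fin (v κ) → Fin k → GTy K c v)
      (A : Fin (c κ) → GTy K c v) (B : Fin (v κ) → GTy K c v)
      (hmem : ∀ i, .cons κ (fun j => As j i) (fun j => Bs j i) ∈ S)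
      (hA : ∀ j i, FromAtoms (A j).atoms (As j i))
      (hB : ∀ j, FromAtoms (ctxAtoms (List.ofFn (Bs j))) (B j)) :
      FromAtoms S (.cons κ A B)

lemma FromAtoms.mono {S S' : List (GTy K c v)} {C : GTy K c v}
    (h : FromAtoms w S C) (hS : S ⊆ S') : FromAtoms w S' C := by
  induction h generalizing S' with
  | inter _ _ ihA ihB => exact .inter (ihA hS) (ihB hS)
  | cons κ k hk As Bs A B hmem hA hB =>
    exact .cons κ k hk As Bs A B (fun i => hS (hmem i)) hA hB

lemma fromAtoms_ctxAtoms {Γ : List (GTy K c v)} {C : GTy K c v} (h : ISC w Γ C) :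
    FromAtoms w (ctxAtoms Γ) C := by
  induction h with
  | wk κ f g _ ih =>
    exact ih.mono (ctxAtoms_subset_ctxAtoms (by simp [List.subset_def]; tauto))
  | interR _ _ ihA ihB => exact .inter ihA ihB
  | interL _ ih => simpa [atoms] using ih
  | constr κ k hk As Bs A B _ _ ihA ihB =>
    refine .cons κ k hk As Bs A B (fun i => ?_) (fun j i => by simpa using ihA j i) ihB
    exact mem_ctxAtoms.2 ⟨_, List.mem_ofFn.2 ⟨i, rfl⟩, by simp [atoms]⟩

lemma FromAtoms.isc_of_subset (hw : ∀ κ, w κ ≤ 1) {S : List (GTy K c v)} {C : GTy K c v}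
    (h : FromAtoms w S C) {Γ : List (GTy K c v)} (hS : S ⊆ ctxAtoms Γ) : ISC w Γ C := by
  induction h generalizing Γ with
  | inter _ _ ihA ihB => exact interR (ihA hS) (ihB hS)
  | @cons S κ k hk As Bs A B hmem _ _ ihA ihB =>
    obtain ⟨k', σ, hsub, hσ⟩ := (ctxAtoms Γ).exists_ofFn_comp_sublist
      fun i => GTy.cons κ (fun j => As j i) (fun j => Bs j i)
    have hσ' : ∀ i, ∃ q, ∀ j, Bs j (σ q) = Bs j i := fun i => by
      obtain ⟨q, hq⟩ := hσ i (hS (hmem i))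
      simp only [cons.injEq, heq_eq_eq, true_and] at hq
      exact ⟨q, congrFun hq.2⟩
    have hk' : w κ ≤ k' := by
      rcases k.eq_zero_or_pos with rfl | hpos
      · omega
      · obtain ⟨q, -⟩ := hσ' ⟨0, hpos⟩
        exact (hw κ).trans (Fin.pos q)
    have hconstr := constr κ k' hk' (fun j q => As j (σ q)) (fun j q => Bs j (σ q)) A B
      (fun j q => ihA j (σ q) (by simp))
      (fun j => ihB j <| ctxAtoms_subset_ctxAtoms fun x hx => by
        obtain ⟨i, rfl⟩ := List.mem_ofFn.1 hx
        obtain ⟨q, hq⟩ := hσ' i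
        exact List.mem_ofFn.2 ⟨q, hq j⟩)
    simpa using of_ctxAtoms Γ (Γ := []) (weaken_of_sublist hsub (Γ := []) hconstr)

end ISC

/-- Admissibility of contraction in ISC: if `Γ, A, A, Δ ⊢ C` then `Γ, A, Δ ⊢ C`. -/
theorem ISC.contraction {K : Type} {c v : K → ℕ} (w : K → ℕ) (hw : ∀ κ, w κ ≤ 1)
    {Γ Δ : List (GTy K c v)} {A C : GTy K c v}
    (h : ISC w (Γ ++ A :: A :: Δ) C) : ISC w (Γ ++ A :: Δ) C :=
  (fromAtoms_ctxAtoms h).isc_of_subset hw <| GTy.ctxAtoms_subset_ctxAtoms <| by simp [List.subset_def]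
end

section
/- Admissibility of cut in ISC: If Γ ⊢ A and Δ,A,Σ ⊢ C are derivable in ISC, then Δ,Γ,Σ ⊢ C is derivable in ISC. -/
/-!
Contexts are read as multisets: derivable sequents are closed under permutation, because the
constructor rule may list its columns in any order. Weakening and the invertibility of both
∩ rules go by induction on derivations; contraction and cut by induction on the formula,
with an inner induction on the derivation of the sequent that contains it.

Contracting a constructor type merges two identical columns of a constructor rule, which
leaves at least one column: this is where `w κ ≤ 1` is needed. A principal cut on `A ∩ B`
becomes cuts on `A` and on `B`, followed by a contraction of the duplicated context. A cut on
`κ(a; b)` against a constructor rule is pushed up the left derivation until that derivation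
also ends with a constructor rule; the two families of columns are then merged, and the
premises are joined by cuts on the components `a j` and `b j`.
-/

theorem Multiset.coe_append_cons {α : Type*} (Γ Δ : List α) (a : α) :
    ((Γ ++ a :: Δ : List α) : Multiset α) = a ::ₘ ↑(Γ ++ Δ) :=
  Multiset.coe_eq_coe.mpr List.perm_middle

theorem Multiset.exists_append_cons_of_coe_eq_cons {α : Type*} {l : List α} {a : α}
    {s : Multiset α} (h : (l : Multiset α) = a ::ₘ s) :
    ∃ l₁ l₂ : List α, l = l₁ ++ a :: l₂ ∧ ((l₁ ++ l₂ : List α) : Multiset α) = s := by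
  obtain ⟨l₁, l₂, rfl⟩ := List.append_of_mem (Multiset.mem_coe.mp (h ▸ Multiset.mem_cons_self _ _))
  rw [Multiset.coe_append_cons, Multiset.cons_inj_right] at h
  exact ⟨l₁, l₂, rfl, h⟩

theorem Multiset.exists_coe_eq_and_map_eq {α β : Type*} {f : α → β} :
    ∀ {l : List β} {s : Multiset α}, (l : Multiset β) = s.map f →
      ∃ l' : List α, (l' : Multiset α) = s ∧ l'.map f = l
  | [], _, h => ⟨[], (Multiset.map_eq_zero.mp h.symm).symm, rfl⟩
  | b :: l, s, h => by
    obtain ⟨a, ha, rfl⟩ := Multiset.mem_map.mp (h ▸ Multiset.mem_coe.mpr List.mem_cons_self)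
    obtain ⟨s, rfl⟩ := Multiset.exists_cons_of_mem ha
    rw [Multiset.map_cons, ← Multiset.cons_coe, Multiset.cons_inj_right] at h
    obtain ⟨l', rfl, rfl⟩ := exists_coe_eq_and_map_eq h
    exact ⟨a :: l', rfl, rfl⟩

section

variable {K : Type} {c v : K → ℕ}

theorem GTy.uncurry_cons_injective (κ : K) :
    Function.Injective (Function.uncurry (GTy.cons (c := c) (v := v) κ)) := by
  rintro ⟨f, g⟩ ⟨f', g'⟩ h
  cases h
  rfl

def GTy.ChildrenSatisfy (P : GTy K c v → Prop) : GTy K c v → Prop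
  | inter A B => P A ∧ P B
  | cons _ f g => (∀ j, P (f j)) ∧ ∀ j, P (g j)

theorem GTy.forall_of_childrenSatisfy {P : GTy K c v → Prop}
    (h : ∀ X : GTy K c v, X.ChildrenSatisfy P → P X) (X : GTy K c v) : P X := by
  induction X with
  | inter A B ihA ihB => exact h _ ⟨ihA, ihB⟩
  | cons κ f g ihf ihg => exact h _ ⟨ihf, ihg⟩

theorem ISC.constr_list {w : K → ℕ} (κ : K)
    (cols : List ((Fin (c κ) → GTy K c v) × (Fin (v κ) → GTy K c v))) (hk : w κ ≤ cols.length)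
    (A : Fin (c κ) → GTy K c v) (B : Fin (v κ) → GTy K c v)
    (hA : ∀ p ∈ cols, ∀ j, ISC w [A j] (p.1 j)) (hB : ∀ j, ISC w (cols.map (·.2 j)) (B j)) :
    ISC w (cols.map (Function.uncurry (GTy.cons κ))) (GTy.cons κ A B) := by
  have h := ISC.constr κ cols.length hk (fun j i => cols[i].1 j) (fun j i => cols[i].2 j) A B
    (fun j i => hA _ (List.getElem_mem _) j)
    (fun j => (List.ofFn_getElem_eq_map cols (·.2 j)).symm ▸ hB j)
  rw [← List.ofFn_getElem_eq_map]
  exact h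

/-- ISC with multiset contexts, so that exchange is built in. In `constr`, a column
`κ(Aᵢ; Bᵢ)` of the context is recorded as the pair `(Aᵢ, Bᵢ)`. -/
inductive MISC (w : K → ℕ) : Multiset (GTy K c v) → GTy K c v → Prop
  | wk {Γ : Multiset (GTy K c v)} {C : GTy K c v} (κ : K)
      (f : Fin (c κ) → GTy K c v) (g : Fin (v κ) → GTy K c v) :
      MISC w Γ C → MISC w (GTy.cons κ f g ::ₘ Γ) C
  | interR {Γ : Multiset (GTy K c v)} {A B : GTy K c v} :
      MISC w Γ A → MISC w Γ B → MISC w Γ (GTy.inter A B)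
  | interL {Γ : Multiset (GTy K c v)} {A B C : GTy K c v} :
      MISC w (A ::ₘ B ::ₘ Γ) C → MISC w (GTy.inter A B ::ₘ Γ) C
  | constr (κ : K) (cols : Multiset ((Fin (c κ) → GTy K c v) × (Fin (v κ) → GTy K c v)))
      (hk : w κ ≤ Multiset.card cols) (A : Fin (c κ) → GTy K c v) (B : Fin (v κ) → GTy K c v) :
      (∀ p ∈ cols, ∀ j, MISC w {A j} (p.1 j)) →
      (∀ j, MISC w (cols.map (·.2 j)) (B j)) →
      MISC w (cols.map (Function.uncurry (GTy.cons κ))) (GTy.cons κ A B)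

namespace MISC

variable {w : K → ℕ}

theorem of_isc {Γ : List (GTy K c v)} {C : GTy K c v} (h : ISC w Γ C) : MISC w Γ C := by
  induction h with
  | wk κ f g _ ih => rw [Multiset.coe_append_cons]; exact ih.wk κ f g
  | interR _ _ ihA ihB => exact ihA.interR ihB
  | interL _ ih =>
    rw [Multiset.coe_append_cons]
    refine interL ?_
    rwa [Multiset.coe_append_cons, Multiset.coe_append_cons] at ih
  | constr κ k hk As Bs A B _ _ ihA ihB =>
    have h := constr (w := w) κ ↑(List.ofFn fun i => ((As · i), (Bs · i))) (by simpa using hk) A B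
      (by simpa using fun i j => ihA j i)
      (fun j => by rw [Multiset.map_coe, List.map_ofFn]; exact ihB j)
    rw [Multiset.map_coe, List.map_ofFn] at h
    exact h

theorem toISC {T : Multiset (GTy K c v)} {C : GTy K c v} (h : MISC w T C) :
    ∀ Γ : List (GTy K c v), ↑Γ = T → ISC w Γ C := by
  induction h with
  | wk κ f g _ ih =>
    intro Γ hΓ
    obtain ⟨Γ₁, Γ₂, rfl, hΓ₁₂⟩ := Multiset.exists_append_cons_of_coe_eq_cons hΓ
    exact (ih _ hΓ₁₂).wk κ f g
  | interR _ _ ihA ihB => exact fun Γ hΓ => (ihA Γ hΓ).interR (ihB Γ hΓ)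
  | interL _ ih =>
    intro Γ hΓ
    obtain ⟨Γ₁, Γ₂, rfl, hΓ₁₂⟩ := Multiset.exists_append_cons_of_coe_eq_cons hΓ
    refine ISC.interL (ih _ ?_)
    rw [Multiset.coe_append_cons, Multiset.coe_append_cons, hΓ₁₂]
  | constr κ cols hk A B _ _ ihA ihB =>
    intro Γ hΓ
    obtain ⟨L, rfl, rfl⟩ := Multiset.exists_coe_eq_and_map_eq hΓ
    exact ISC.constr_list κ L (by simpa using hk) A B (fun p hp j => ihA p hp j [A j] rfl)
      (fun j => ihB j _ (by simp))

theorem weaken_cons (X : GTy K c v) {Γ : Multiset (GTy K c v)} {C : GTy K c v}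
    (h : MISC w Γ C) : MISC w (X ::ₘ Γ) C := by
  induction X generalizing Γ with
  | inter A B ihA ihB => exact interL (ihA (ihB h))
  | cons κ f g => exact h.wk κ f g

theorem weaken (Δ : Multiset (GTy K c v)) {Γ : Multiset (GTy K c v)} {C : GTy K c v}
    (h : MISC w Γ C) : MISC w (Δ + Γ) C := by
  induction Δ using Multiset.induction with
  | empty => rwa [zero_add]
  | cons X Δ ih => rw [Multiset.cons_add]; exact ih.weaken_cons X

theorem interR_inv {Γ : Multiset (GTy K c v)} {A B : GTy K c v} (h : MISC w Γ (A.inter B)) :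
    MISC w Γ A ∧ MISC w Γ B := by
  generalize hX : A.inter B = X at h
  induction h with
  | wk κ f g _ ih => exact (ih hX).imp (wk κ f g) (wk κ f g)
  | interR hA hB => cases hX; exact ⟨hA, hB⟩
  | interL _ ih => exact (ih hX).imp interL interL
  | constr => cases hX

theorem interL_inv {Γ : Multiset (GTy K c v)} {A B C : GTy K c v}
    (h : MISC w (A.inter B ::ₘ Γ) C) : MISC w (A ::ₘ B ::ₘ Γ) C := by
  generalize hT : A.inter B ::ₘ Γ = T at h
  induction h generalizing Γ with
  | wk κ f g _ ih =>
    obtain ⟨-, u, rfl, rfl⟩ := (Multiset.cons_eq_cons.mp hT).resolve_left (by simp)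
    convert (ih rfl).wk κ f g using 1
    simp [Multiset.cons_swap]
  | interR _ _ ihA ihB => exact (ihA hT).interR (ihB hT)
  | @interL _ A' B' C h ih =>
    rcases Multiset.cons_eq_cons.mp hT with ⟨hAB, rfl⟩ | ⟨-, u, rfl, rfl⟩
    · cases hAB; exact h
    · have h' : MISC w (A' ::ₘ B' ::ₘ A ::ₘ B ::ₘ u) C := by
        convert ih (Γ := A' ::ₘ B' ::ₘ u) (by simp [Multiset.cons_swap]) using 1
        simp [Multiset.cons_swap]
      convert interL h' using 1
      simp [Multiset.cons_swap]
  | constr κ cols =>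
    obtain ⟨p, -, hp⟩ := Multiset.mem_map.mp (hT ▸ Multiset.mem_cons_self _ _)
    cases hp

def ContractionAdmissible (w : K → ℕ) (X : GTy K c v) : Prop :=
  ∀ Γ C, X ∈ Γ → MISC w (X ::ₘ Γ) C → MISC w Γ C

theorem contractionAdmissible_of_children (hw : ∀ κ, w κ ≤ 1) {X : GTy K c v}
    (hX : X.ChildrenSatisfy (ContractionAdmissible w)) : ContractionAdmissible w X := by
  intro Γ C hXΓ h
  generalize hT : X ::ₘ Γ = T at h
  induction h generalizing Γ with
  | wk κ f g h ih =>
    rcases Multiset.cons_eq_cons.mp hT with ⟨rfl, rfl⟩ | ⟨hne, u, rfl, rfl⟩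
    · exact h
    · exact (ih u (Multiset.mem_cons.mp hXΓ |>.resolve_left hne) rfl).wk κ f g
  | interR _ _ ihA ihB => exact (ihA Γ hXΓ hT).interR (ihB Γ hXΓ hT)
  | @interL T A B C h ih =>
    rcases Multiset.cons_eq_cons.mp hT with ⟨rfl, rfl⟩ | ⟨hne, u, rfl, rfl⟩
    · obtain ⟨Γ, rfl⟩ := Multiset.exists_cons_of_mem hXΓ
      have h' : MISC w (A ::ₘ B ::ₘ A ::ₘ B ::ₘ Γ) C :=
        interL_inv (by convert h using 1; simp [Multiset.cons_swap])
      exact interL (hX.2 _ _ (by simp) (hX.1 _ _ (by simp) h'))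
    · have hu : X ∈ u := (Multiset.mem_cons.mp hXΓ).resolve_left hne
      exact interL (ih (A ::ₘ B ::ₘ u) (by simp [hu]) (by simp [Multiset.cons_swap]))
  | constr κ cols hk A B hA hB =>
    classical
    obtain ⟨q, hq, rfl, rfl⟩ := (Multiset.map_eq_cons _ _ _ _).mpr hT.symm
    have hq' : q ∈ cols.erase q :=
      (Multiset.mem_map_of_injective (GTy.uncurry_cons_injective κ)).mp hXΓ
    refine constr κ (cols.erase q) ((hw κ).trans (Multiset.card_pos_iff_exists_mem.mpr ⟨q, hq'⟩))
      A B (fun p hp => hA p (Multiset.mem_of_mem_erase hp)) fun j => ?_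
    have hBj := hB j
    rw [← Multiset.cons_erase hq, Multiset.map_cons] at hBj
    exact hX.2 j _ _ (Multiset.mem_map_of_mem _ hq') hBj

theorem contractionAdmissible (hw : ∀ κ, w κ ≤ 1) (X : GTy K c v) : ContractionAdmissible w X :=
  GTy.forall_of_childrenSatisfy (fun _ => contractionAdmissible_of_children hw) X

theorem contract_add (hw : ∀ κ, w κ ≤ 1) (Γ : Multiset (GTy K c v)) {Δ : Multiset (GTy K c v)}
    {C : GTy K c v} (h : MISC w (Γ + Γ + Δ) C) : MISC w (Γ + Δ) C := by
  induction Γ using Multiset.induction generalizing Δ with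
  | empty => simpa using h
  | cons X Γ ih =>
    have h' : MISC w (Γ + Γ + X ::ₘ Δ) C :=
      contractionAdmissible hw X _ C (by simp) (by convert h using 1; simp)
    convert ih h' using 1
    simp

def CutAdmissible (w : K → ℕ) (X : GTy K c v) : Prop :=
  ∀ Γ Δ C, MISC w Γ X → MISC w (X ::ₘ Δ) C → MISC w (Γ + Δ) C

theorem cut_inter (hw : ∀ κ, w κ ≤ 1) {A B C : GTy K c v} {Γ Δ : Multiset (GTy K c v)}
    (hA : CutAdmissible w A) (hB : CutAdmissible w B)
    (h₁ : MISC w Γ (A.inter B)) (h₂ : MISC w (A ::ₘ B ::ₘ Δ) C) : MISC w (Γ + Δ) C := by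
  obtain ⟨hΓA, hΓB⟩ := h₁.interR_inv
  have hcutA : MISC w (B ::ₘ (Γ + Δ)) C := by
    rw [← Multiset.add_cons]; exact hA _ _ _ hΓA h₂
  have hcutB : MISC w (Γ + Γ + Δ) C := by
    rw [add_assoc]; exact hB _ _ _ hΓB hcutA
  exact contract_add hw Γ hcutB

theorem cut_cons {κ : K} {a : Fin (c κ) → GTy K c v} {b : Fin (v κ) → GTy K c v}
    (ha : ∀ j, CutAdmissible w (a j)) (hb : ∀ j, CutAdmissible w (b j))
    {Γ : Multiset (GTy K c v)} (h : MISC w Γ (GTy.cons κ a b))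
    (cols : Multiset ((Fin (c κ) → GTy K c v) × (Fin (v κ) → GTy K c v)))
    {A : Fin (c κ) → GTy K c v} {B : Fin (v κ) → GTy K c v} (haA : ∀ j, MISC w {A j} (a j))
    (hA : ∀ p ∈ cols, ∀ j, MISC w {A j} (p.1 j))
    (hB : ∀ j, MISC w (b j ::ₘ cols.map (·.2 j)) (B j)) :
    MISC w (Γ + cols.map (Function.uncurry (GTy.cons κ))) (GTy.cons κ A B) := by
  generalize hX : GTy.cons κ a b = X at h
  induction h with
  | wk κ' f g _ ih => rw [Multiset.cons_add]; exact (ih hX).wk κ' f g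
  | interR => cases hX
  | interL _ ih => rw [Multiset.cons_add]; exact interL (by simpa using ih hX)
  | constr κ cols₂ hk₂ a₂ b₂ ha₂ hb₂ =>
    cases hX
    rw [← Multiset.map_add]
    refine constr κ (cols₂ + cols) (hk₂.trans (by simp)) A B (fun p hp j => ?_) fun j => ?_
    · rcases Multiset.mem_add.mp hp with hp | hp
      · simpa using ha j _ 0 _ (haA j) (ha₂ p hp j)
      · exact hA p hp j
    · rw [Multiset.map_add]
      exact hb j _ _ _ (hb₂ j) (hB j)

theorem cutAdmissible_of_children (hw : ∀ κ, w κ ≤ 1) {X : GTy K c v}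
    (hX : X.ChildrenSatisfy (CutAdmissible w)) : CutAdmissible w X := by
  intro Γ Δ C hΓ h
  generalize hT : X ::ₘ Δ = T at h
  induction h generalizing Δ with
  | wk κ f g h ih =>
    rcases Multiset.cons_eq_cons.mp hT with ⟨rfl, rfl⟩ | ⟨-, u, rfl, rfl⟩
    · exact h.weaken Γ
    · rw [Multiset.add_cons]; exact (ih u rfl).wk κ f g
  | interR _ _ ihA ihB => exact (ihA Δ hT).interR (ihB Δ hT)
  | @interL T A B C h ih =>
    rcases Multiset.cons_eq_cons.mp hT with ⟨rfl, rfl⟩ | ⟨-, u, rfl, rfl⟩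
    · exact cut_inter hw hX.1 hX.2 hΓ h
    · rw [Multiset.add_cons]
      exact interL (by simpa using ih (A ::ₘ B ::ₘ u) (by simp [Multiset.cons_swap]))
  | constr κ cols hk A B hA hB =>
    classical
    obtain ⟨q, hq, rfl, rfl⟩ := (Multiset.map_eq_cons _ _ _ _).mpr hT.symm
    refine cut_cons hX.1 hX.2 hΓ (cols.erase q) (hA q hq)
      (fun p hp => hA p (Multiset.mem_of_mem_erase hp)) fun j => ?_
    have hBj := hB j
    rwa [← Multiset.cons_erase hq, Multiset.map_cons] at hBj

theorem cutAdmissible (hw : ∀ κ, w κ ≤ 1) (X : GTy K c v) : CutAdmissible w X :=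
  GTy.forall_of_childrenSatisfy (fun _ => cutAdmissible_of_children hw) X

end MISC

end

/-- Admissibility of cut in ISC: if `Γ ⊢ A` and `Δ, A, Σ ⊢ C`
then `Δ, Γ, Σ ⊢ C`. -/
theorem ISC.cut {K : Type} {c v : K → ℕ} (w : K → ℕ) (hw : ∀ κ, w κ ≤ 1)
    {Γ Δ S : List (GTy K c v)} {A C : GTy K c v}
    (h1 : ISC w Γ A) (h2 : ISC w (Δ ++ A :: S) C) :
    ISC w (Δ ++ Γ ++ S) C := by
  have h2' := MISC.of_isc h2
  rw [Multiset.coe_append_cons] at h2'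
  refine (MISC.cutAdmissible hw A _ _ C (MISC.of_isc h1) h2').toISC _ ?_
  simp only [← Multiset.coe_add]
  abel
end

section
/- Inversion in ISC: Fix κ ∈ K. If the sequent κ(A₁¹,…,A_{c(κ)}¹;B₁¹,…,B_{v(κ)}¹),…,κ(A₁ᵏ,…,A_{c(κ)}ᵏ;B₁ᵏ,…,B_{v(κ)}ᵏ) ⊢ κ(A₁,…,A_{c(κ)};B₁,…,B_{v(κ)}) is derivable in ISC, then there exists a subset {i₁,…,i_p} ⊆ {1,…,k} such that Aⱼ ⊢ Aⱼ^{i_q} is derivable for all 1 ≤ j ≤ c(κ) and 1 ≤ q ≤ p, and Bⱼ^{i₁},…,Bⱼ^{i_p} ⊢ Bⱼ is derivable for all 1 ≤ j ≤ v(κ). -/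
/-!
Induct on the derivation of `Γ ⊢ κ(Ā;B̄)`, where `Γ` is a sublist of the given family of
`κ`-constructors. The succedent is not an intersection, so the last rule is not (∩R), and
`Γ` contains no intersection, so it is not (∩L) either. A final (wk) deletes one member
of the family and the induction hypothesis applies to the rest; a final (constr) must have
the same `κ` and consumes all of `Γ`, so its premises are the required sequents.
-/

namespace ISC

variable {K : Type} {c v : K → ℕ} {w : K → ℕ} {κ : K} {k : ℕ}
  {As : Fin (c κ) → Fin k → GTy K c v} {Bs : Fin (v κ) → Fin k → GTy K c v}
  {A : Fin (c κ) → GTy K c v} {B : Fin (v κ) → GTy K c v}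

theorem cons_args_of_map_eq_ofFn {L : List (Fin k)}
    {As' : Fin (c κ) → Fin L.length → GTy K c v} {Bs' : Fin (v κ) → Fin L.length → GTy K c v}
    (h : (L.map fun i => GTy.cons κ (fun j => As j i) (fun j => Bs j i)) =
      List.ofFn fun q => GTy.cons κ (fun j => As' j q) (fun j => Bs' j q)) :
    (∀ j (q : Fin L.length), As j L[(q : ℕ)] = As' j q) ∧
      ∀ j (q : Fin L.length), Bs j L[(q : ℕ)] = Bs' j q := by
  rw [← List.ofFn_getElem_eq_map, List.ofFn_inj, funext_iff] at h
  simp only [GTy.cons.injEq, heq_eq_eq, true_and, funext_iff] at h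
  exact ⟨fun j q => (h q).1 j, fun j q => (h q).2 j⟩

theorem exists_sublist_of_map_cons {L : List (Fin k)}
    (h : ISC w (L.map fun i => GTy.cons κ (fun j => As j i) (fun j => Bs j i))
      (GTy.cons κ A B)) :
    ∃ is : List (Fin k), is.Sublist L ∧
      (∀ j, ∀ i ∈ is, ISC w [A j] (As j i)) ∧
      (∀ j, ISC w (is.map fun i => Bs j i) (B j)) := by
  generalize hΓ : L.map _ = Γ, hC : GTy.cons κ A B = C at h
  induction h generalizing L with
  | wk _ _ _ _ ih =>
    obtain ⟨L₁, L₂', rfl, rfl, h₂⟩ := List.map_eq_append_iff.mp hΓ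
    obtain ⟨i, L₂, rfl, -, rfl⟩ := List.map_eq_cons_iff.mp h₂
    obtain ⟨is, hsub, hA, hB⟩ := ih (L := L₁ ++ L₂) (List.map_append ..) hC
    exact ⟨is, hsub.trans ((List.sublist_cons_self i L₂).append_left L₁), hA, hB⟩
  | interR => cases hC
  | interL =>
    obtain ⟨_, _, h⟩ := List.mem_map.mp (hΓ ▸ List.mem_append_right _ List.mem_cons_self)
    cases h
  | constr _ k' _ _ _ _ _ hA' hB' =>
    obtain ⟨rfl, hA, hB⟩ := GTy.cons.inj hC
    cases hA; cases hB
    obtain rfl : L.length = k' := by simpa using congrArg List.length hΓ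
    obtain ⟨hAs, hBs⟩ := cons_args_of_map_eq_ofFn hΓ
    refine ⟨L, .refl L, fun j i hi => ?_, fun j => ?_⟩
    · obtain ⟨n, hn, rfl⟩ := List.getElem_of_mem hi
      exact hAs j ⟨n, hn⟩ ▸ hA' j ⟨n, hn⟩
    · simpa [← List.ofFn_getElem_eq_map, hBs] using hB' j

end ISC

theorem ISC.inversion_general {K : Type} {c v : K → ℕ} (w : K → ℕ)
    (κ : K) (k : ℕ)
    (As : Fin (c κ) → Fin k → GTy K c v) (Bs : Fin (v κ) → Fin k → GTy K c v)
    (A : Fin (c κ) → GTy K c v) (B : Fin (v κ) → GTy K c v)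
    (h : ISC w (List.ofFn fun i => GTy.cons κ (fun j => As j i) (fun j => Bs j i))
          (GTy.cons κ A B)) :
    ∃ is : List (Fin k), is.Sublist (List.finRange k) ∧
      (∀ j, ∀ i ∈ is, ISC w [A j] (As j i)) ∧
      (∀ j, ISC w (is.map fun i => Bs j i) (B j)) :=
  exists_sublist_of_map_cons (List.ofFn_eq_map ▸ h)

/-- Inversion in ISC: if `κ(A₁¹,…;B₁¹,…), …, κ(A₁ᵏ,…;B₁ᵏ,…) ⊢ κ(A₁,…;B₁,…)`
is derivable, then there is a subset `{i₁,…,i_p} ⊆ {1,…,k}` such that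
`Aⱼ ⊢ Aⱼ^{i_q}` for all `j, q` and `Bⱼ^{i₁},…,Bⱼ^{i_p} ⊢ Bⱼ` for all `j`. -/
theorem ISC.inversion {K : Type} {c v : K → ℕ} (w : K → ℕ) (hw : ∀ κ, w κ ≤ 1)
    (κ : K) (k : ℕ)
    (As : Fin (c κ) → Fin k → GTy K c v) (Bs : Fin (v κ) → Fin k → GTy K c v)
    (A : Fin (c κ) → GTy K c v) (B : Fin (v κ) → GTy K c v)
    (h : ISC w (List.ofFn fun i => GTy.cons κ (fun j => As j i) (fun j => Bs j i))
          (GTy.cons κ A B)) :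
    ∃ is : List (Fin k), is.Sublist (List.finRange k) ∧
      (∀ j, ∀ i ∈ is, ISC w [A j] (As j i)) ∧
      (∀ j, ISC w (is.map fun i => Bs j i) (B j)) :=
  ISC.inversion_general w κ k As Bs A B h
end

section
/- Equivalence of ISC with BCD subtyping extended to products: For all types A and B, the singleton sequent A ⊢ B is derivable in the instantiated ISC system if and only if A ≤ B holds in the BCD subtyping relation with products. -/
/-- The BCD subtyping relation extended with product types. -/
inductive BCD {X : Type} : Ty X → Ty X → Prop
  | refl (A : Ty X) : BCD A A
  | trans {A B C : Ty X} : BCD A B → BCD B C → BCD A C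
  | omega (A : Ty X) : BCD A .omega
  | inter_l1 (A B : Ty X) : BCD (.inter A B) A
  | inter_l2 (A B : Ty X) : BCD (.inter A B) B
  | inter_dup (A : Ty X) : BCD A (.inter A A)
  | inter_mono {A B C D : Ty X} : BCD A C → BCD B D → BCD (.inter A B) (.inter C D)
  | arrow_mono {A B C D : Ty X} : BCD C A → BCD B D → BCD (.arrow A B) (.arrow C D)
  | arrow_inter (A B C : Ty X) :
      BCD (.inter (.arrow A B) (.arrow A C)) (.arrow A (.inter B C))
  | omega_arrow : BCD .omega (.arrow .omega .omega)
  | prod_mono {A B C D : Ty X} : BCD A C → BCD B D → BCD (.prod A B) (.prod C D)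
  | prod_inter (A B C D : Ty X) :
      BCD (.inter (.prod A B) (.prod C D)) (.prod (.inter A C) (.inter B D))

/-- `A` is an intersection type. -/
def Ty.isInter {X : Type} : Ty X → Prop
  | .inter _ _ => True
  | _ => False

/-- The ISC sequent system instantiated with the constructors
`X`, `Ω`, `→`, `×` (Table 7 of the paper). -/
inductive ISCp {X : Type} : List (Ty X) → Ty X → Prop
  | wk {Γ Δ : List (Ty X)} {C : Ty X} (A : Ty X) (hA : ¬ A.isInter) :
      ISCp (Γ ++ Δ) C → ISCp (Γ ++ A :: Δ) C
  | interR {Γ : List (Ty X)} {A B : Ty X} : ISCp Γ A → ISCp Γ B → ISCp Γ (.inter A B)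
  | interL {Γ Δ : List (Ty X)} {A B C : Ty X} :
      ISCp (Γ ++ A :: B :: Δ) C → ISCp (Γ ++ Ty.inter A B :: Δ) C
  | ax (x : X) : ISCp [.base x] (.base x)
  | omega : ISCp [] .omega
  | arrow (l : List (Ty X × Ty X)) (hl : l ≠ []) (A B : Ty X) :
      (∀ p ∈ l, ISCp [A] p.1) → ISCp (l.map Prod.snd) B →
      ISCp (l.map fun p => Ty.arrow p.1 p.2) (.arrow A B)
  | arrow0 (A : Ty X) {B : Ty X} : ISCp [] B → ISCp [] (.arrow A B)
  | prod (l : List (Ty X × Ty X)) (hl : l ≠ []) (A B : Ty X) :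
      ISCp (l.map Prod.fst) A → ISCp (l.map Prod.snd) B →
      ISCp (l.map fun p => Ty.prod p.1 p.2) (.prod A B)

/-!
Soundness: reading a context as the intersection of its members, every ISC rule is a valid
BCD inequality. Completeness: every BCD axiom is derivable and transitivity is an instance of
cut, so it suffices that cut is admissible. This is proved for the variant of ISC whose
contexts are multisets, by induction on the size of the cut formula and then on the right
derivation. When the cut formula is principal on the right as an arrow or a product, one
inducts on the left derivation, which ends in the matching right rule after some left
structural steps; when it is an intersection, the ∩ rules are inverted, and the two cuts
duplicate the left context, which is then contracted. Contraction is admissible by the same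
scheme.
-/

namespace Multiset

variable {α β : Type*}

theorem exists_eq_cons_of_cons_eq_cons_of_ne {a b : α} {s t : Multiset α} (hab : a ≠ b)
    (h : a ::ₘ s = b ::ₘ t) : ∃ u, s = b ::ₘ u ∧ t = a ::ₘ u :=
  ((cons_eq_cons.1 h).resolve_left fun h' => hab h'.1).2

theorem exists_eq_cons_of_map_eq_cons {f : α → β} {s : Multiset α} {b : β} {t : Multiset β}
    (h : s.map f = b ::ₘ t) : ∃ a s', s = a ::ₘ s' ∧ f a = b ∧ s'.map f = t := by
  classical
  obtain ⟨a, ha, hfa, hs⟩ := (map_eq_cons f s t b).2 h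
  exact ⟨a, s.erase a, (cons_erase ha).symm, hfa, hs⟩

theorem exists_eq_map_of_coe_eq_map {f : α → β} {l : List β} {s : Multiset α}
    (h : (l : Multiset β) = s.map f) :
    ∃ l' : List α, (l' : Multiset α) = s ∧ l = l'.map f := by
  induction s using Quot.inductionOn with
  | h s =>
    obtain ⟨l', hl', hperm⟩ : Relation.Comp (· = List.map f ·) List.Perm l s :=
      List.eq_map_comp_perm f ▸ Quotient.exact h
    exact ⟨l', Quot.sound hperm, hl'⟩

theorem coe_append_cons_s17 (l₁ l₂ : List α) (a : α) :
    ((l₁ ++ a :: l₂ : List α) : Multiset α) = a ::ₘ (l₁ ++ l₂ : List α) :=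
  Quot.sound List.perm_middle

theorem exists_eq_append_of_coe_eq_cons {l : List α} {a : α} {s : Multiset α}
    (h : (l : Multiset α) = a ::ₘ s) :
    ∃ l₁ l₂, l = l₁ ++ a :: l₂ ∧ ((l₁ ++ l₂ : List α) : Multiset α) = s := by
  obtain ⟨l₁, l₂, rfl⟩ := List.append_of_mem (show a ∈ l from by simp [← mem_coe, h])
  refine ⟨l₁, l₂, rfl, ?_⟩
  rw [← cons_inj_right a, ← h, coe_append_cons_s17]

end Multiset

namespace BCD

variable {X : Type} {D A B : Ty X}

theorem le_inter (hA : BCD D A) (hB : BCD D B) : BCD D (.inter A B) :=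
  (inter_dup D).trans (inter_mono hA hB)

theorem le_interList_iff {Γ : List (Ty X)} : BCD D (interList Γ) ↔ ∀ G ∈ Γ, BCD D G := by
  induction Γ with
  | nil => simpa [interList] using omega D
  | cons G Γ ih =>
    cases Γ with
    | nil => simp [interList]
    | cons G' Γ =>
      simp only [interList, List.forall_mem_cons] at ih ⊢
      rw [← ih]
      exact ⟨fun h => ⟨h.trans (inter_l1 _ _), h.trans (inter_l2 _ _)⟩,
        fun h => le_inter h.1 h.2⟩

theorem interList_le_of_mem {Γ : List (Ty X)} {G : Ty X} (hG : G ∈ Γ) : BCD (interList Γ) G :=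
  le_interList_iff.1 (refl _) G hG

theorem le_arrow_interList {Γ : List (Ty X)} (hΓ : Γ ≠ [])
    (h : ∀ G ∈ Γ, BCD D (.arrow A G)) : BCD D (.arrow A (interList Γ)) := by
  induction Γ with
  | nil => exact absurd rfl hΓ
  | cons G Γ ih =>
    cases Γ with
    | nil => simpa [interList] using h
    | cons G' Γ =>
      rw [List.forall_mem_cons] at h
      exact (le_inter h.1 (ih (List.cons_ne_nil _ _) h.2)).trans (arrow_inter _ _ _)

theorem le_prod_interList {l : List (Ty X × Ty X)} (hl : l ≠ [])
    (h : ∀ p ∈ l, BCD D (.prod p.1 p.2)) :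
    BCD D (.prod (interList (l.map Prod.fst)) (interList (l.map Prod.snd))) := by
  induction l with
  | nil => exact absurd rfl hl
  | cons p l ih =>
    cases l with
    | nil => simpa [interList] using h
    | cons q l =>
      rw [List.forall_mem_cons] at h
      exact (le_inter h.1 (ih (List.cons_ne_nil _ _) h.2)).trans (prod_inter _ _ _ _)

end BCD

theorem ISCp.bcd_interList {X : Type} {Γ : List (Ty X)} {C : Ty X} (h : ISCp Γ C) :
    BCD (interList Γ) C := by
  induction h with
  | wk A _ _ ih =>
    refine (BCD.le_interList_iff.2 fun G hG => BCD.interList_le_of_mem ?_).trans ih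
    simp only [List.mem_append, List.mem_cons] at hG ⊢
    tauto
  | interR _ _ ihA ihB => exact BCD.le_inter ihA ihB
  | @interL Γ Δ A B C _ ih =>
    have hAB : BCD (interList (Γ ++ .inter A B :: Δ)) (.inter A B) :=
      BCD.interList_le_of_mem (by simp)
    refine (BCD.le_interList_iff.2 fun G hG => ?_).trans ih
    simp only [List.mem_append, List.mem_cons] at hG
    rcases hG with hG | rfl | rfl | hG
    · exact BCD.interList_le_of_mem (by simp [hG])
    · exact hAB.trans (BCD.inter_l1 _ _)
    · exact hAB.trans (BCD.inter_l2 _ _)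
    · exact BCD.interList_le_of_mem (by simp [hG])
  | ax x => exact BCD.refl _
  | omega => exact BCD.refl _
  | arrow l hl A B _ _ ihA ihB =>
    refine (BCD.le_arrow_interList (by simpa using hl) fun G hG => ?_).trans
      (BCD.arrow_mono (BCD.refl A) ihB)
    obtain ⟨p, hp, rfl⟩ := List.mem_map.1 hG
    exact (BCD.interList_le_of_mem (List.mem_map_of_mem hp)).trans
      (BCD.arrow_mono (ihA p hp) (BCD.refl _))
  | arrow0 A _ ih => exact BCD.omega_arrow.trans (BCD.arrow_mono (BCD.omega A) ih)
  | prod l hl A B _ _ ihA ihB =>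
    refine (BCD.le_prod_interList hl fun p hp => ?_).trans (BCD.prod_mono ihA ihB)
    exact BCD.interList_le_of_mem (List.mem_map_of_mem hp)

open Multiset

/-- `ISCp` with contexts taken up to permutation, so that the left rules act on the head of
the context. -/
inductive ISCm {X : Type} : Multiset (Ty X) → Ty X → Prop
  | wk {Γ : Multiset (Ty X)} {C : Ty X} (A : Ty X) (hA : ¬ A.isInter) :
      ISCm Γ C → ISCm (A ::ₘ Γ) C
  | interR {Γ : Multiset (Ty X)} {A B : Ty X} : ISCm Γ A → ISCm Γ B → ISCm Γ (.inter A B)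
  | interL {Γ : Multiset (Ty X)} {A B C : Ty X} :
      ISCm (A ::ₘ B ::ₘ Γ) C → ISCm (.inter A B ::ₘ Γ) C
  | ax (x : X) : ISCm {.base x} (.base x)
  | omega : ISCm 0 .omega
  | arrow (l : Multiset (Ty X × Ty X)) (hl : l ≠ 0) (A B : Ty X) :
      (∀ p ∈ l, ISCm {A} p.1) → ISCm (l.map Prod.snd) B →
      ISCm (l.map fun p => .arrow p.1 p.2) (.arrow A B)
  | arrow0 (A : Ty X) {B : Ty X} : ISCm 0 B → ISCm 0 (.arrow A B)
  | prod (l : Multiset (Ty X × Ty X)) (hl : l ≠ 0) (A B : Ty X) :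
      ISCm (l.map Prod.fst) A → ISCm (l.map Prod.snd) B →
      ISCm (l.map fun p => .prod p.1 p.2) (.prod A B)

namespace ISCm

variable {X : Type} {Γ Δ : Multiset (Ty X)} {A B C : Ty X}

theorem toISCp (h : ISCm Γ C) : ∀ l : List (Ty X), (l : Multiset (Ty X)) = Γ → ISCp l C := by
  induction h with
  | wk A hA _ ih =>
    intro l hl
    obtain ⟨l₁, l₂, rfl, hΓ⟩ := exists_eq_append_of_coe_eq_cons hl
    exact (ih _ hΓ).wk A hA
  | interR _ _ ihA ihB => exact fun l hl => (ihA l hl).interR (ihB l hl)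
  | interL _ ih =>
    intro l hl
    obtain ⟨l₁, l₂, rfl, hΓ⟩ := exists_eq_append_of_coe_eq_cons hl
    exact (ih _ (by rw [coe_append_cons_s17, coe_append_cons_s17, hΓ])).interL
  | ax x => intro l hl; rw [coe_eq_singleton.1 hl]; exact .ax x
  | omega => intro l hl; rw [(coe_eq_zero l).1 hl]; exact .omega
  | arrow l hl A B _ _ ihA ihB =>
    intro l' hl'
    obtain ⟨l₀, rfl, rfl⟩ := exists_eq_map_of_coe_eq_map hl'
    exact .arrow l₀ (by simpa using hl) A B (fun p hp => ihA p hp [A] rfl) (ihB _ (by simp))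
  | arrow0 A _ ih => intro l hl; rw [(coe_eq_zero l).1 hl]; exact .arrow0 A (ih [] rfl)
  | prod l hl A B _ _ ihA ihB =>
    intro l' hl'
    obtain ⟨l₀, rfl, rfl⟩ := exists_eq_map_of_coe_eq_map hl'
    exact .prod l₀ (by simpa using hl) A B (ihA _ (by simp)) (ihB _ (by simp))

theorem weaken (A : Ty X) (h : ISCm Γ C) : ISCm (A ::ₘ Γ) C := by
  induction A generalizing Γ with
  | inter P Q ihP ihQ => exact .interL (ihP (ihQ h))
  | _ => exact h.wk _ id

theorem inter_inv (h : ISCm Γ (.inter A B)) : ISCm Γ A ∧ ISCm Γ B := by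
  generalize hC : Ty.inter A B = C at h
  induction h with
  | wk _ hD _ ih => exact (ih hC).imp (wk _ hD) (wk _ hD)
  | interR hA hB => cases hC; exact ⟨hA, hB⟩
  | interL _ ih => exact (ih hC).imp interL interL
  | _ => cases hC

theorem interL_inv (h : ISCm (.inter A B ::ₘ Γ) C) : ISCm (A ::ₘ B ::ₘ Γ) C := by
  generalize hΓ : Ty.inter A B ::ₘ Γ = Γ' at h
  induction h generalizing Γ with
  | wk D hD _ ih =>
    obtain ⟨u, rfl, rfl⟩ :=
      exists_eq_cons_of_cons_eq_cons_of_ne (by rintro rfl; exact hD trivial) hΓ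
    simpa only [cons_swap] using (ih rfl).wk D hD
  | interR _ _ ihA ihB => exact (ihA hΓ).interR (ihB hΓ)
  | @interL Γ₀ P Q C h ih =>
    rcases cons_eq_cons.1 hΓ with ⟨hPQ, rfl⟩ | ⟨_, u, rfl, rfl⟩
    · cases hPQ; exact h
    · have h' : ISCm (P ::ₘ Q ::ₘ A ::ₘ B ::ₘ u) C := by
        simpa only [cons_swap] using ih (Γ := P ::ₘ Q ::ₘ u) (by simp only [cons_swap])
      simpa only [cons_swap] using h'.interL
  | ax x => cases ((singleton_eq_cons_iff _).1 hΓ.symm).1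
  | omega | arrow0 => exact absurd hΓ cons_ne_zero
  | arrow l =>
    obtain ⟨p, -, hp⟩ := mem_map.1 (hΓ ▸ mem_cons_self _ _)
    cases hp
  | prod l =>
    obtain ⟨p, -, hp⟩ := mem_map.1 (hΓ ▸ mem_cons_self _ _)
    cases hp

def ContractionAdmissible (A : Ty X) : Prop :=
  ∀ {Γ : Multiset (Ty X)} {C : Ty X}, ISCm (A ::ₘ A ::ₘ Γ) C → ISCm (A ::ₘ Γ) C

theorem contraction_inter {P Q : Ty X} (hP : ContractionAdmissible P)
    (hQ : ContractionAdmissible Q) (h : ISCm (P ::ₘ Q ::ₘ .inter P Q ::ₘ Γ) C) :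
    ISCm (.inter P Q ::ₘ Γ) C := by
  have h₁ : ISCm (P ::ₘ P ::ₘ Q ::ₘ Q ::ₘ Γ) C := by
    convert interL_inv (Γ := P ::ₘ Q ::ₘ Γ) (by simpa only [cons_swap] using h) using 2
    simp only [← singleton_add]; abel
  have h₂ : ISCm (Q ::ₘ Q ::ₘ P ::ₘ Γ) C := by simpa only [cons_swap] using hP h₁
  exact interL (by simpa only [cons_swap] using hQ h₂)

theorem contractionAdmissible_of_lt (A : Ty X)
    (ih : ∀ B : Ty X, sizeOf B < sizeOf A → ContractionAdmissible B) :
    ContractionAdmissible A := by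
  intro Γ C h
  generalize hΓ : A ::ₘ A ::ₘ Γ = Γ' at h
  induction h generalizing Γ with
  | wk B hB h ihw =>
    by_cases hBA : A = B
    · subst hBA
      exact cons_inj_right _ |>.1 hΓ ▸ h
    · obtain ⟨u, hu, rfl⟩ := exists_eq_cons_of_cons_eq_cons_of_ne hBA hΓ
      obtain ⟨v, rfl, rfl⟩ := exists_eq_cons_of_cons_eq_cons_of_ne hBA hu
      simpa only [cons_swap] using (ihw rfl).wk B hB
  | interR _ _ ih₁ ih₂ => exact (ih₁ hΓ).interR (ih₂ hΓ)
  | @interL Γ₀ P Q C h ihw =>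
    by_cases hPQ : A = .inter P Q
    · subst hPQ
      obtain rfl := cons_inj_right _ |>.1 hΓ
      exact contraction_inter (ih P (by simp +arith)) (ih Q (by simp +arith)) h
    · obtain ⟨u, hu, rfl⟩ := exists_eq_cons_of_cons_eq_cons_of_ne hPQ hΓ
      obtain ⟨v, rfl, rfl⟩ := exists_eq_cons_of_cons_eq_cons_of_ne hPQ hu
      have h' : ISCm (P ::ₘ Q ::ₘ A ::ₘ v) C := by
        simpa only [cons_swap] using ihw (Γ := P ::ₘ Q ::ₘ v) (by simp only [cons_swap])
      simpa only [cons_swap] using h'.interL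
  | ax x => exact absurd ((singleton_eq_cons_iff _).1 hΓ.symm).2 cons_ne_zero
  | omega | arrow0 => exact absurd hΓ cons_ne_zero
  | arrow l _ A' B' h₁ h₂ =>
    obtain ⟨p, l', rfl, rfl, hl'⟩ := exists_eq_cons_of_map_eq_cons hΓ.symm
    obtain ⟨q, l'', rfl, hq, rfl⟩ := exists_eq_cons_of_map_eq_cons hl'
    obtain rfl : p = q := by simp only [Ty.arrow.injEq] at hq; exact (Prod.ext hq.1 hq.2).symm
    have h₂' := ih p.2 (by simp +arith) (by simpa using h₂)
    simpa using ISCm.arrow (p ::ₘ l'') cons_ne_zero A' B'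
      (fun r hr => h₁ r (mem_cons_of_mem hr)) (by simpa using h₂')
  | prod l _ A' B' h₁ h₂ =>
    obtain ⟨p, l', rfl, rfl, hl'⟩ := exists_eq_cons_of_map_eq_cons hΓ.symm
    obtain ⟨q, l'', rfl, hq, rfl⟩ := exists_eq_cons_of_map_eq_cons hl'
    obtain rfl : p = q := by simp only [Ty.prod.injEq] at hq; exact (Prod.ext hq.1 hq.2).symm
    have h₁' := ih p.1 (by simp +arith) (by simpa using h₁)
    have h₂' := ih p.2 (by simp +arith) (by simpa using h₂)
    simpa using ISCm.prod (p ::ₘ l'') cons_ne_zero A' B' (by simpa using h₁')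
      (by simpa using h₂')

theorem contractionAdmissible (A : Ty X) : ContractionAdmissible A :=
  contractionAdmissible_of_lt A fun B _ => contractionAdmissible B
termination_by sizeOf A

theorem contraction_add (h : ISCm (Γ + Γ + Δ) C) : ISCm (Γ + Δ) C := by
  induction Γ using Multiset.induction_on generalizing Δ with
  | empty => simpa using h
  | cons a Γ ih =>
    have h' := contractionAdmissible a (Γ := Γ + Γ + Δ)
      (by simpa only [cons_add, add_cons] using h)
    simpa only [cons_add, add_cons] using ih (Δ := a ::ₘ Δ) (by simpa only [add_cons] using h')

theorem weaken_add (h : ISCm Δ C) : ISCm (Γ + Δ) C := by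
  induction Γ using Multiset.induction_on with
  | empty => simpa using h
  | cons a Γ ih => simpa only [cons_add] using ih.weaken a

def CutAdmissible (A : Ty X) : Prop :=
  ∀ {Γ Δ : Multiset (Ty X)} {C : Ty X}, ISCm Γ A → ISCm (A ::ₘ Δ) C → ISCm (Γ + Δ) C

theorem cut_inter {P Q : Ty X} (hP : CutAdmissible P) (hQ : CutAdmissible Q)
    (hL : ISCm Γ (.inter P Q)) (hR : ISCm (P ::ₘ Q ::ₘ Δ) C) : ISCm (Γ + Δ) C := by
  obtain ⟨hLP, hLQ⟩ := hL.inter_inv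
  rw [cons_swap] at hR
  have h₁ : ISCm (Γ + (P ::ₘ Δ)) C := hQ hLQ hR
  have h₂ : ISCm (Γ + (Γ + Δ)) C := hP hLP (by simpa only [add_cons] using h₁)
  exact contraction_add (by rwa [add_assoc])

theorem cut_arrow {a b : Ty X} {l : Multiset (Ty X × Ty X)} (ha : CutAdmissible a)
    (hb : CutAdmissible b) (hL : ISCm Γ (.arrow a b)) (hA : ISCm {A} a)
    (h₁ : ∀ q ∈ l, ISCm {A} q.1) (h₂ : ISCm (b ::ₘ l.map Prod.snd) B) :
    ISCm (Γ + l.map fun p => .arrow p.1 p.2) (.arrow A B) := by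
  generalize hT : Ty.arrow a b = T at hL
  induction hL with
  | wk D hD _ ih => rw [cons_add]; exact (ih hT).wk D hD
  | interL _ ih => rw [cons_add]; exact interL (by simpa only [cons_add] using ih hT)
  | arrow lL hlL _ _ g₁ g₂ =>
    cases hT
    refine Multiset.map_add _ _ _ ▸ ISCm.arrow (lL + l) (by simp [hlL]) A B (fun q hq => ?_)
      (by simpa using hb g₂ h₂)
    rcases mem_add.1 hq with hq | hq
    · simpa using ha hA (g₁ q hq)
    · exact h₁ q hq
  | arrow0 _ g =>
    cases hT
    have h₂' : ISCm (l.map Prod.snd) B := by simpa using hb g h₂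
    rcases eq_or_ne l 0 with rfl | hl
    · simpa using ISCm.arrow0 A (by simpa using h₂')
    · simpa using ISCm.arrow l hl A B h₁ h₂'
  | _ => cases hT

theorem cut_prod {a b : Ty X} {l : Multiset (Ty X × Ty X)} (ha : CutAdmissible a)
    (hb : CutAdmissible b) (hL : ISCm Γ (.prod a b))
    (h₁ : ISCm (a ::ₘ l.map Prod.fst) A) (h₂ : ISCm (b ::ₘ l.map Prod.snd) B) :
    ISCm (Γ + l.map fun p => .prod p.1 p.2) (.prod A B) := by
  generalize hT : Ty.prod a b = T at hL
  induction hL with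
  | wk D hD _ ih => rw [cons_add]; exact (ih hT).wk D hD
  | interL _ ih => rw [cons_add]; exact interL (by simpa only [cons_add] using ih hT)
  | prod lL hlL _ _ g₁ g₂ =>
    cases hT
    exact Multiset.map_add _ _ _ ▸ ISCm.prod (lL + l) (by simp [hlL]) A B
      (by simpa using ha g₁ h₁) (by simpa using hb g₂ h₂)
  | _ => cases hT

theorem cutAdmissible_of_lt (A : Ty X)
    (ih : ∀ B : Ty X, sizeOf B < sizeOf A → CutAdmissible B) : CutAdmissible A := by
  intro Γ Δ C hL hR
  generalize hΔ : A ::ₘ Δ = Δ' at hR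
  induction hR generalizing Δ with
  | wk B hB h ihw =>
    by_cases hAB : A = B
    · subst hAB
      exact cons_inj_right _ |>.1 hΔ ▸ weaken_add h
    · obtain ⟨u, rfl, rfl⟩ := exists_eq_cons_of_cons_eq_cons_of_ne hAB hΔ
      simpa only [add_cons] using (ihw rfl).wk B hB
  | interR _ _ ih₁ ih₂ => exact (ih₁ hΔ).interR (ih₂ hΔ)
  | @interL Δ₀ P Q C h ihw =>
    by_cases hPQ : A = .inter P Q
    · subst hPQ
      obtain rfl := cons_inj_right _ |>.1 hΔ
      exact cut_inter (ih P (by simp +arith)) (ih Q (by simp +arith)) hL h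
    · obtain ⟨u, rfl, rfl⟩ := exists_eq_cons_of_cons_eq_cons_of_ne hPQ hΔ
      have h' : ISCm (P ::ₘ Q ::ₘ (Γ + u)) C := by
        simpa only [add_cons] using
          ihw (Δ := P ::ₘ Q ::ₘ u) (by rw [cons_swap A P, cons_swap A Q])
      simpa only [add_cons] using h'.interL
  | ax x =>
    obtain ⟨rfl, rfl⟩ := (singleton_eq_cons_iff _).1 hΔ.symm
    simpa using hL
  | omega | arrow0 => exact absurd hΔ cons_ne_zero
  | arrow l _ A' B' h₁ h₂ =>
    obtain ⟨p, l', rfl, rfl, rfl⟩ := exists_eq_cons_of_map_eq_cons hΔ.symm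
    exact cut_arrow (ih p.1 (by simp +arith)) (ih p.2 (by simp +arith)) hL
      (h₁ p (mem_cons_self _ _)) (fun q hq => h₁ q (mem_cons_of_mem hq)) (by simpa using h₂)
  | prod l _ A' B' h₁ h₂ =>
    obtain ⟨p, l', rfl, rfl, rfl⟩ := exists_eq_cons_of_map_eq_cons hΔ.symm
    exact cut_prod (ih p.1 (by simp +arith)) (ih p.2 (by simp +arith)) hL
      (by simpa using h₁) (by simpa using h₂)

theorem cutAdmissible (A : Ty X) : CutAdmissible A :=
  cutAdmissible_of_lt A fun B _ => cutAdmissible B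
termination_by sizeOf A

theorem interL_of_left (h : ISCm {A} C) : ISCm {.inter A B} C :=
  .interL (cons_swap B A 0 ▸ h.weaken B)

theorem interL_of_right (h : ISCm {B} C) : ISCm {.inter A B} C :=
  .interL (h.weaken A)

theorem arrow_mono {D : Ty X} (h₁ : ISCm {C} A) (h₂ : ISCm {B} D) :
    ISCm {.arrow A B} (.arrow C D) := by
  simpa using ISCm.arrow {(A, B)} (singleton_ne_zero _) C D (by simpa using h₁)
    (by simpa using h₂)

theorem prod_mono {D : Ty X} (h₁ : ISCm {A} C) (h₂ : ISCm {B} D) :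
    ISCm {.prod A B} (.prod C D) := by
  simpa using ISCm.prod {(A, B)} (singleton_ne_zero _) C D (by simpa using h₁)
    (by simpa using h₂)

theorem refl (A : Ty X) : ISCm {A} A := by
  induction A with
  | base x => exact .ax x
  | omega => exact ISCm.omega.weaken _
  | inter P Q ihP ihQ => exact .interR (interL_of_left ihP) (interL_of_right ihQ)
  | arrow a b iha ihb => exact arrow_mono iha ihb
  | prod a b iha ihb => exact prod_mono iha ihb

theorem of_bcd (h : BCD A B) : ISCm {A} B := by
  induction h with
  | refl A => exact refl A
  | trans _ _ ih₁ ih₂ => simpa using cutAdmissible _ ih₁ ih₂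
  | omega A => exact ISCm.omega.weaken A
  | inter_l1 A B => exact interL_of_left (refl A)
  | inter_l2 A B => exact interL_of_right (refl B)
  | inter_dup A => exact .interR (refl A) (refl A)
  | inter_mono _ _ ih₁ ih₂ => exact .interR (interL_of_left ih₁) (interL_of_right ih₂)
  | arrow_mono _ _ ih₁ ih₂ => exact arrow_mono ih₁ ih₂
  | arrow_inter A B C =>
    have h := ISCm.arrow {(A, B), (A, C)} (by simp) A (.inter B C) (by simpa using refl A)
      (by simpa using (refl (.inter B C)).interL_inv)
    exact .interL (by simpa using h)
  | omega_arrow => exact (ISCm.arrow0 .omega .omega).weaken .omega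
  | prod_mono _ _ ih₁ ih₂ => exact prod_mono ih₁ ih₂
  | prod_inter A B C D =>
    have h := ISCm.prod {(A, B), (C, D)} (by simp) (.inter A C) (.inter B D)
      (by simpa using (refl (.inter A C)).interL_inv)
      (by simpa using (refl (.inter B D)).interL_inv)
    exact .interL (by simpa using h)

end ISCm

theorem ISCp_iff_BCD_general {X : Type} (A B : Ty X) :
    ISCp [A] B ↔ BCD A B :=
  ⟨fun h => h.bcd_interList, fun h => (ISCm.of_bcd h).toISCp [A] rfl⟩

/-- Equivalence of the instantiated ISC system with BCD subtyping extended
to products: `A ⊢ B` is derivable in ISC iff `A ≤ B` in BCD with products. -/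
theorem ISCp_iff_BCD {X : Type} [Countable X] (A B : Ty X) :
    ISCp [A] B ↔ BCD A B :=
  ISCp_iff_BCD_general A B
end

section
/- Inversion for arrow in BCD subtyping with products: For every finite family of types (Aᵢ)_{i∈I}, (Bᵢ)_{i∈I} and types A, B, if ⋂_{i∈I}(Aᵢ→Bᵢ) ≤ A→B in the BCD subtyping relation with products, then there exists a subset J ⊆ I such that ⋂_{i∈J}Bᵢ ≤ B (the empty intersection being Ω) and A ≤ Aᵢ for all i ∈ J. -/
/-!
Write every type as the intersection of its *conjuncts*, its components that are neither
intersections nor `Ω`. Say that `C` covers the arrow `A → B` when `C` has arrow conjuncts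
`Aᵢ → Bᵢ` with `A ≤ Aᵢ` for all `i` and `⋂ᵢ Bᵢ ≤ B`. By induction on the derivation of `C ≤ D`,
every arrow conjunct of `D` is covered by `C`: covering is closed under the arrow rules, it
composes along transitivity, and the product rules never produce arrow conjuncts. The conjuncts
of `⋂ᵢ (Aᵢ → Bᵢ)` are exactly the `Aᵢ → Bᵢ`, which gives the theorem.
-/

section

variable {X : Type}

def Ty.conjuncts : Ty X → List (Ty X)
  | .inter A B => A.conjuncts ++ B.conjuncts
  | .omega => []
  | A => [A]

@[simp] lemma Ty.conjuncts_inter (A B : Ty X) :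
    (Ty.inter A B).conjuncts = A.conjuncts ++ B.conjuncts := rfl
@[simp] lemma Ty.conjuncts_omega : (Ty.omega : Ty X).conjuncts = [] := rfl
@[simp] lemma Ty.conjuncts_arrow (A B : Ty X) : (Ty.arrow A B).conjuncts = [.arrow A B] := rfl
@[simp] lemma Ty.conjuncts_prod (A B : Ty X) : (Ty.prod A B).conjuncts = [.prod A B] := rfl

lemma Ty.conjuncts_interList (l : List (Ty X)) :
    (interList l).conjuncts = l.flatMap Ty.conjuncts := by
  induction l using interList.induct <;> simp_all [interList]

namespace BCD

lemma interList_le {l : List (Ty X)} {A : Ty X} (hA : A ∈ l) : BCD (interList l) A := by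
  induction l using interList.induct with
  | case1 => simp at hA
  | case2 => rw [List.mem_singleton.mp hA]; exact refl _
  | case3 B l hl ih =>
    rw [interList.eq_3 B l hl]
    rcases List.mem_cons.mp hA with rfl | hA
    · exact inter_l1 _ _
    · exact trans (inter_l2 _ _) (ih hA)

lemma le_inter_s18 {A B C : Ty X} (hB : BCD A B) (hC : BCD A C) : BCD A (.inter B C) :=
  trans (inter_dup A) (inter_mono hB hC)

lemma le_interList {l : List (Ty X)} {C : Ty X} (h : ∀ A ∈ l, BCD C A) : BCD C (interList l) := by
  induction l using interList.induct with
  | case1 => exact omega C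
  | case2 A => exact h A (List.mem_singleton_self A)
  | case3 A l hl ih =>
    rw [interList.eq_3 A l hl]
    exact le_inter_s18 (h A List.mem_cons_self) (ih fun B hB => h B (List.mem_cons_of_mem A hB))

lemma interList_le_interList {l m : List (Ty X)} (h : m ⊆ l) :
    BCD (interList l) (interList m) :=
  le_interList fun _ hA => interList_le (h hA)

lemma inter_le_interList_cons (A : Ty X) (l : List (Ty X)) :
    BCD (.inter A (interList l)) (interList (A :: l)) :=
  le_interList fun _ hB => (List.mem_cons.mp hB).elim (· ▸ inter_l1 _ _)
    fun hB => trans (inter_l2 _ _) (interList_le hB)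

end BCD

open BCD

def ArrowCovered (C A B : Ty X) : Prop :=
  ∃ J : List (Ty X × Ty X), (∀ p ∈ J, Ty.arrow p.1 p.2 ∈ C.conjuncts) ∧
    BCD (interList (J.map Prod.snd)) B ∧ ∀ p ∈ J, BCD A p.1

namespace ArrowCovered

variable {A A' B B' B₁ B₂ C C' : Ty X}

lemma of_mem (h : .arrow A B ∈ C.conjuncts) : ArrowCovered C A B :=
  ⟨[(A, B)], by simpa using h, refl B, by simpa using refl A⟩

lemma omega_right : ArrowCovered C A .omega :=
  ⟨[], by simp, refl _, by simp⟩

lemma mono_left (hC : C.conjuncts ⊆ C'.conjuncts) (h : ArrowCovered C A B) :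
    ArrowCovered C' A B :=
  let ⟨J, hJC, hJB, hAJ⟩ := h
  ⟨J, fun p hp => hC (hJC p hp), hJB, hAJ⟩

lemma arrow_mono (hA : BCD A' A) (hB : BCD B B') (h : ArrowCovered C A B) :
    ArrowCovered C A' B' :=
  let ⟨J, hJC, hJB, hAJ⟩ := h
  ⟨J, hJC, BCD.trans hJB hB, fun p hp => BCD.trans hA (hAJ p hp)⟩

lemma inter (h₁ : ArrowCovered C A B₁) (h₂ : ArrowCovered C A B₂) :
    ArrowCovered C A (.inter B₁ B₂) := by
  obtain ⟨J₁, hJC₁, hJB₁, hAJ₁⟩ := h₁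
  obtain ⟨J₂, hJC₂, hJB₂, hAJ₂⟩ := h₂
  refine ⟨J₁ ++ J₂, ?_, le_inter_s18 ?_ ?_, ?_⟩
  · simpa [or_imp, forall_and] using And.intro hJC₁ hJC₂
  · exact BCD.trans (interList_le_interList (by simp)) hJB₁
  · exact BCD.trans (interList_le_interList (by simp)) hJB₂
  · simpa [or_imp, forall_and] using And.intro hAJ₁ hAJ₂

lemma interList {J : List (Ty X × Ty X)} (h : ∀ p ∈ J, ArrowCovered C A p.2) :
    ArrowCovered C A (interList (J.map Prod.snd)) := by
  induction J with
  | nil => exact omega_right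
  | cons p J ih =>
    have hJ := ih fun q hq => h q (List.mem_cons_of_mem p hq)
    exact ((h p List.mem_cons_self).inter hJ).arrow_mono (refl A) (inter_le_interList_cons _ _)

lemma trans {E : Ty X} (hCE : ∀ A B, .arrow A B ∈ E.conjuncts → ArrowCovered C A B)
    (h : ArrowCovered E A B) : ArrowCovered C A B :=
  let ⟨_, hJE, hJB, hAJ⟩ := h
  (ArrowCovered.interList fun p hp => (hCE _ _ (hJE p hp)).arrow_mono (hAJ p hp) (refl _)).arrow_mono
    (refl A) hJB

end ArrowCovered

theorem BCD.arrowCovered {C D : Ty X} (h : BCD C D) :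
    ∀ {A B}, .arrow A B ∈ D.conjuncts → ArrowCovered C A B := by
  induction h with
  | refl => exact ArrowCovered.of_mem
  | trans _ _ ih₁ ih₂ => exact fun hD => ArrowCovered.trans (fun _ _ => ih₁) (ih₂ hD)
  | omega => simp
  | inter_l1 | inter_l2 => exact fun hD => ArrowCovered.of_mem (by simp [hD])
  | inter_dup => exact fun hD => ArrowCovered.of_mem (by simpa using hD)
  | inter_mono _ _ ih₁ ih₂ =>
    intro A B hD
    rcases List.mem_append.mp hD with hD | hD
    · exact (ih₁ hD).mono_left (List.subset_append_left _ _)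
    · exact (ih₂ hD).mono_left (List.subset_append_right _ _)
  | arrow_mono hA hB =>
    intro A B hD
    obtain ⟨rfl, rfl⟩ := by simpa using hD
    exact (ArrowCovered.of_mem (by simp)).arrow_mono hA hB
  | arrow_inter =>
    intro A B hD
    obtain ⟨rfl, rfl⟩ := by simpa using hD
    exact (ArrowCovered.of_mem (by simp)).inter (ArrowCovered.of_mem (by simp))
  | omega_arrow =>
    intro A B hD
    obtain ⟨rfl, rfl⟩ := by simpa using hD
    exact ArrowCovered.omega_right
  | prod_mono | prod_inter => simp

lemma mem_of_arrow_mem_conjuncts_interList {l : List (Ty X × Ty X)} {A B : Ty X}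
    (h : .arrow A B ∈ (interList (l.map fun p => Ty.arrow p.1 p.2)).conjuncts) : (A, B) ∈ l := by
  simpa [Ty.conjuncts_interList] using h

end

theorem BCD.arrow_inversion_general {X : Type}
    (l : List (Ty X × Ty X)) (A B : Ty X)
    (h : BCD (interList (l.map fun p => Ty.arrow p.1 p.2)) (Ty.arrow A B)) :
    ∃ l' : List (Ty X × Ty X), l'.Sublist l ∧
      BCD (interList (l'.map Prod.snd)) B ∧ ∀ p ∈ l', BCD A p.1 := by
  classical
  obtain ⟨J, hJC, hJB, hAJ⟩ := h.arrowCovered (List.mem_singleton_self (Ty.arrow A B))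
  have hJl : ∀ p ∈ J, p ∈ l := fun p hp => mem_of_arrow_mem_conjuncts_interList (hJC p hp)
  refine ⟨l.filter (· ∈ J), List.filter_sublist, trans (interList_le_interList ?_) hJB, ?_⟩
  · intro C hC
    obtain ⟨p, hp, rfl⟩ := List.mem_map.mp hC
    exact List.mem_map_of_mem (List.mem_filter.mpr ⟨hJl p hp, by simpa using hp⟩)
  · intro p hp
    exact hAJ p (by simpa using (List.mem_filter.mp hp).2)

/-- Inversion for arrow in BCD subtyping with products: if
`⋂ᵢ (Aᵢ → Bᵢ) ≤ A → B` then there is a subfamily `J` with `⋂_{i∈J} Bᵢ ≤ B`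
and `A ≤ Aᵢ` for all `i ∈ J`. -/
theorem BCD.arrow_inversion {X : Type} [Countable X]
    (l : List (Ty X × Ty X)) (A B : Ty X)
    (h : BCD (interList (l.map fun p => Ty.arrow p.1 p.2)) (Ty.arrow A B)) :
    ∃ l' : List (Ty X × Ty X), l'.Sublist l ∧
      BCD (interList (l'.map Prod.snd)) B ∧ ∀ p ∈ l', BCD A p.1 :=
  BCD.arrow_inversion_general l A B h
end

section
/- Inversion for product in BCD subtyping with products: For every finite family of types (Aᵢ)_{i∈I}, (Bᵢ)_{i∈I} and types A, B, if ⋂_{i∈I}(Aᵢ×Bᵢ) ≤ A×B in the BCD subtyping relation with products, then ⋂_{i∈I}Aᵢ ≤ A and ⋂_{i∈I}Bᵢ ≤ B (the empty intersection being Ω). -/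
/-- First projection on product parts. -/
def Ty.proj1 {X : Type} : Ty X → Ty X
  | .prod A _ => A
  | .inter A B => .inter A.proj1 B.proj1
  | _ => .omega

/-- Second projection on product parts. -/
def Ty.proj2 {X : Type} : Ty X → Ty X
  | .prod _ B => B
  | .inter A B => .inter A.proj2 B.proj2
  | _ => .omega

theorem BCD.proj1_mono {X : Type} {C D : Ty X} (h : BCD C D) :
    BCD C.proj1 D.proj1 := by
  induction h with
  | refl A => exact .refl _
  | trans _ _ ih1 ih2 => exact .trans ih1 ih2
  | omega A => exact .omega _
  | inter_l1 A B => exact .inter_l1 _ _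
  | inter_l2 A B => exact .inter_l2 _ _
  | inter_dup A => exact .inter_dup _
  | inter_mono _ _ ih1 ih2 => exact .inter_mono ih1 ih2
  | arrow_mono _ _ _ _ => exact .omega _
  | arrow_inter A B C => exact .omega _
  | omega_arrow => exact .refl _
  | prod_mono h1 h2 _ _ => exact h1
  | prod_inter A B C D => exact .refl _

theorem BCD.proj2_mono {X : Type} {C D : Ty X} (h : BCD C D) :
    BCD C.proj2 D.proj2 := by
  induction h with
  | refl A => exact .refl _
  | trans _ _ ih1 ih2 => exact .trans ih1 ih2
  | omega A => exact .omega _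
  | inter_l1 A B => exact .inter_l1 _ _
  | inter_l2 A B => exact .inter_l2 _ _
  | inter_dup A => exact .inter_dup _
  | inter_mono _ _ ih1 ih2 => exact .inter_mono ih1 ih2
  | arrow_mono _ _ _ _ => exact .omega _
  | arrow_inter A B C => exact .omega _
  | omega_arrow => exact .refl _
  | prod_mono h1 h2 _ _ => exact h2
  | prod_inter A B C D => exact .refl _

theorem interList_proj1 {X : Type} (l : List (Ty X × Ty X)) :
    (interList (l.map fun p => Ty.prod p.1 p.2)).proj1 = interList (l.map Prod.fst) := by
  match l with
  | [] => rfl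
  | [p] => rfl
  | p :: q :: r =>
    simp only [List.map_cons, interList, Ty.proj1]
    have ih := interList_proj1 (q :: r)
    simp only [List.map_cons] at ih
    rw [ih]

theorem interList_proj2 {X : Type} (l : List (Ty X × Ty X)) :
    (interList (l.map fun p => Ty.prod p.1 p.2)).proj2 = interList (l.map Prod.snd) := by
  match l with
  | [] => rfl
  | [p] => rfl
  | p :: q :: r =>
    simp only [List.map_cons, interList, Ty.proj2]
    have ih := interList_proj2 (q :: r)
    simp only [List.map_cons] at ih
    rw [ih]

/-- Inversion for product in BCD subtyping with products: if
`⋂ᵢ (Aᵢ × Bᵢ) ≤ A × B` then `⋂ᵢ Aᵢ ≤ A` and `⋂ᵢ Bᵢ ≤ B`. -/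
theorem BCD.prod_inversion {X : Type} [Countable X]
    (l : List (Ty X × Ty X)) (A B : Ty X)
    (h : BCD (interList (l.map fun p => Ty.prod p.1 p.2)) (Ty.prod A B)) :
    BCD (interList (l.map Prod.fst)) A ∧ BCD (interList (l.map Prod.snd)) B := by
  have h1 := h.proj1_mono
  have h2 := h.proj2_mono
  rw [interList_proj1] at h1
  rw [interList_proj2] at h2
  exact ⟨h1, h2⟩
end
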